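/- arXiv:2306.04393 — 7 statements merged into one kernel-verified Lean document; each statement's English description precedes it below -/
import Mathlib

section
/- Every maximal independent set of a whiskered graph w(H) on 2n vertices has exactly n elements; equivalently, the independence complex of w(H) is pure of dimension n−1. -/
def whisker {n : ℕ} (H : SimpleGraph (Fin n)) : SimpleGraph (Fin n ⊕ Fin n) :=
  SimpleGraph.fromRel (fun u v =>
    (∃ i j, H.Adj i j ∧ u = Sum.inl i ∧ v = Sum.inl j) ∨ ∃ i, u = Sum.inl i ∧ v = Sum.inr i)

def IsIndep {V : Type*} (G : SimpleGraph V) (S : Set V) : Prop :=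
  ∀ u ∈ S, ∀ v ∈ S, ¬ G.Adj u v

/-- A maximal independent set: an independent set not properly contained in
another independent set. -/
def MaxIndep {V : Type*} [DecidableEq V] (G : SimpleGraph V) (F : Finset V) : Prop :=
  IsIndep G ↑F ∧ ∀ F' : Finset V, IsIndep G ↑F' → F ⊆ F' → F = F'

/-! A maximal independent set `F` of `w(H)` meets each whisker `{xᵢ, yᵢ}` in exactly one
vertex: in at most one because `xᵢ ~ yᵢ`, and in at least one because `yᵢ`, whose only
neighbour is `xᵢ`, could otherwise be added to `F`. So forgetting the side, `xᵢ, yᵢ ↦ i`, is a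
bijection from `F` onto the `n` indices. -/

section MaxIndep

variable {V : Type*} {G : SimpleGraph V}

theorem IsIndep.insert {S : Set V} (hS : IsIndep G S) {v : V} (hv : ∀ u ∈ S, ¬ G.Adj v u) :
    IsIndep G (insert v S) := by
  rintro a (rfl | ha) b (rfl | hb) hab
  · exact G.loopless.irrefl _ hab
  · exact hv b hb hab
  · exact hv a ha hab.symm
  · exact hS a ha b hb hab

theorem MaxIndep.exists_adj_of_notMem [DecidableEq V] {F : Finset V} (hF : MaxIndep G F)
    {v : V} (hv : v ∉ F) :
    ∃ u ∈ F, G.Adj v u := by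
  by_contra! hnadj
  have hins : IsIndep G ↑(insert v F) := by
    rw [Finset.coe_insert]
    exact hF.1.insert hnadj
  exact hv (hF.2 _ hins (Finset.subset_insert v F) ▸ Finset.mem_insert_self v F)

end MaxIndep

section Whisker

variable {n : ℕ} {H : SimpleGraph (Fin n)}

theorem whisker_adj_inl_inr (i : Fin n) : (whisker H).Adj (.inl i) (.inr i) :=
  ⟨Sum.inl_ne_inr, .inl (.inr ⟨i, rfl, rfl⟩)⟩

theorem whisker_adj_inr_iff {i : Fin n} {w : Fin n ⊕ Fin n} :
    (whisker H).Adj (.inr i) w ↔ w = .inl i := by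
  constructor
  · rintro ⟨-, (⟨_, _, _, h, -⟩ | ⟨_, h, -⟩) | (⟨_, _, _, -, h⟩ | ⟨j, hw, hj⟩)⟩
    all_goals simp_all
  · rintro rfl
    exact (whisker_adj_inl_inr i).symm

variable {F : Finset (Fin n ⊕ Fin n)}

theorem MaxIndep.inl_mem_or_inr_mem (hF : MaxIndep (whisker H) F) (i : Fin n) :
    .inl i ∈ F ∨ .inr i ∈ F := by
  refine or_iff_not_imp_right.2 fun hi => ?_
  obtain ⟨u, hu, hadj⟩ := hF.exists_adj_of_notMem hi
  rwa [whisker_adj_inr_iff.1 hadj] at hu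

theorem MaxIndep.surjOn_elim_id_id (hF : MaxIndep (whisker H) F) :
    Set.SurjOn (Sum.elim id id) (F : Set (Fin n ⊕ Fin n)) Set.univ := by
  intro i _
  rcases hF.inl_mem_or_inr_mem i with hi | hi
  exacts [⟨_, hi, rfl⟩, ⟨_, hi, rfl⟩]

theorem IsIndep.injOn_elim_id_id (hF : IsIndep (whisker H) ↑F) :
    Set.InjOn (Sum.elim id id) (F : Set (Fin n ⊕ Fin n)) := by
  rintro (i | i) hu (j | j) hv (hij : i = j) <;> subst hij
  · rfl
  · exact (hF _ hu _ hv (whisker_adj_inl_inr i)).elim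
  · exact (hF _ hv _ hu (whisker_adj_inl_inr i)).elim
  · rfl

end Whisker

/-- Every maximal independent set of a whiskered graph `w(H)` on `2n` vertices
has exactly `n` elements: the independence complex of `w(H)` is pure of
dimension `n - 1`. -/
theorem maxIndep_whisker_card {n : ℕ} (H : SimpleGraph (Fin n))
    (F : Finset (Fin n ⊕ Fin n)) (hF : MaxIndep (whisker H) F) :
    F.card = n := by
  calc F.card = (Finset.univ : Finset (Fin n)).card :=
        Finset.card_nbij _ (fun _ _ => Finset.mem_univ _) hF.1.injOn_elim_id_id
          (by simpa using hF.surjOn_elim_id_id)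
    _ = n := Finset.card_fin n
end

section
/- Every independent set of size n−1 in the whiskered graph w(H) (where H has n vertices) is contained in at most two maximal independent sets of w(H). -/
/-!
A vertex of `w(H)` is `x_i = inl i` or `y_i = inr i`; call `i` its index. Since `x_i ~ y_i`,
an independent set contains at most one vertex of each index, and a maximal one contains exactly
one, because `y_i` is adjacent to `x_i` only. So an independent set `F` of size `n - 1` misses
exactly one index `i`, and a maximal independent set containing `F` is `F ∪ {x_i}` or `F ∪ {y_i}`.
-/

namespace whisker

variable {n : ℕ} (H : SimpleGraph (Fin n))

abbrev index : Fin n ⊕ Fin n → Fin n := Sum.elim id id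

lemma eq_inl_or_eq_inr_of_index_eq {u : Fin n ⊕ Fin n} {i : Fin n} (h : index u = i) :
    u = Sum.inl i ∨ u = Sum.inr i := by
  subst h
  cases u <;> simp

lemma adj_inl_inr (i : Fin n) : (whisker H).Adj (Sum.inl i) (Sum.inr i) := by
  simp [whisker, SimpleGraph.fromRel_adj]

lemma eq_inl_of_adj_inr {u : Fin n ⊕ Fin n} {i : Fin n} (h : (whisker H).Adj u (Sum.inr i)) :
    u = Sum.inl i := by
  simp only [whisker, SimpleGraph.fromRel_adj] at h
  aesop

lemma adj_of_index_eq {u v : Fin n ⊕ Fin n} (h : index u = index v) (hne : u ≠ v) :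
    (whisker H).Adj u v := by
  rcases eq_inl_or_eq_inr_of_index_eq h.symm with rfl | rfl <;>
    rcases u with a | a <;> simp_all [adj_inl_inr, (adj_inl_inr H _).symm]

variable {H}

lemma injOn_index_of_isIndep {S : Set (Fin n ⊕ Fin n)} (hS : IsIndep (whisker H) S) :
    Set.InjOn index S :=
  fun u hu v hv huv => by_contra fun hne => hS u hu v hv (adj_of_index_eq H huv hne)

lemma inl_mem_or_inr_mem_of_maxIndep {M : Finset (Fin n ⊕ Fin n)} (hM : MaxIndep (whisker H) M)
    (i : Fin n) : Sum.inl i ∈ M ∨ Sum.inr i ∈ M := by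
  by_contra! ⟨hl, hr⟩
  have hindep : IsIndep (whisker H) ↑(insert (Sum.inr i) M) := by
    have hfree : ∀ u ∈ M, ¬ (whisker H).Adj u (Sum.inr i) := fun u hu hadj =>
      hl (eq_inl_of_adj_inr H hadj ▸ hu)
    simp only [IsIndep, Finset.coe_insert, Set.mem_insert_iff, Finset.mem_coe]
    rintro u (rfl | hu) v (rfl | hv) hadj
    · exact (whisker H).loopless.irrefl _ hadj
    · exact hfree v hv hadj.symm
    · exact hfree u hu hadj
    · exact hM.1 u hu v hv hadj
  exact hr (hM.2 _ hindep (Finset.subset_insert _ _) ▸ Finset.mem_insert_self _ _)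

lemma exists_forall_ne_mem_image_index {F : Finset (Fin n ⊕ Fin n)} (hF : IsIndep (whisker H) ↑F)
    (hcard : F.card = n - 1) (hn : 0 < n) : ∃ i, ∀ j ≠ i, j ∈ F.image index := by
  have hcompl : (F.image index)ᶜ.card = 1 := by
    rw [Finset.card_compl, Finset.card_image_of_injOn (injOn_index_of_isIndep hF), hcard,
      Fintype.card_fin]
    omega
  obtain ⟨i, hi⟩ := Finset.card_eq_one.mp hcompl
  refine ⟨i, fun j hj => ?_⟩
  by_contra hjF
  exact hj (Finset.mem_singleton.mp (hi ▸ Finset.mem_compl.mpr hjF))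

lemma mem_or_eq_of_forall_ne_mem_image_index {F M : Finset (Fin n ⊕ Fin n)} {i : Fin n}
    (hcov : ∀ j ≠ i, j ∈ F.image index) (hM : IsIndep (whisker H) ↑M) (hFM : F ⊆ M)
    {x : Fin n ⊕ Fin n} (hx : x ∈ M) : x ∈ F ∨ x = Sum.inl i ∨ x = Sum.inr i := by
  by_cases hxF : x ∈ F
  · exact Or.inl hxF
  refine Or.inr (eq_inl_or_eq_inr_of_index_eq (by_contra fun hxi => ?_))
  obtain ⟨f, hf, hfx⟩ := Finset.mem_image.mp (hcov _ hxi)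
  exact hM f (hFM hf) x hx (adj_of_index_eq H hfx (by rintro rfl; exact hxF hf))

lemma maxIndep_eq_insert_of_forall_ne_mem_image_index {F M : Finset (Fin n ⊕ Fin n)} {i : Fin n}
    (hcov : ∀ j ≠ i, j ∈ F.image index) (hM : MaxIndep (whisker H) M) (hFM : F ⊆ M) :
    M = insert (Sum.inl i) F ∨ M = insert (Sum.inr i) F := by
  have hsub : ∀ x ∈ M, x ∈ F ∨ x = Sum.inl i ∨ x = Sum.inr i := fun _ hx =>
    mem_or_eq_of_forall_ne_mem_image_index hcov hM.1 hFM hx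
  rcases inl_mem_or_inr_mem_of_maxIndep hM i with hl | hr
  · have hr : Sum.inr i ∉ M := fun hr => hM.1 _ hl _ hr (adj_inl_inr H i)
    refine Or.inl (Finset.Subset.antisymm (fun x hx => ?_) (Finset.insert_subset hl hFM))
    rcases hsub x hx with h | rfl | rfl <;> simp_all
  · have hl : Sum.inl i ∉ M := fun hl => hM.1 _ hl _ hr (adj_inl_inr H i)
    refine Or.inr (Finset.Subset.antisymm (fun x hx => ?_) (Finset.insert_subset hr hFM))
    rcases hsub x hx with h | rfl | rfl <;> simp_all

end whisker

open whisker in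
/-- Every independent set of size `n - 1` in the whiskered graph `w(H)` is
contained in at most two maximal independent sets of `w(H)`. -/
theorem faces_in_at_most_two_facets {n : ℕ} (H : SimpleGraph (Fin n))
    (F : Finset (Fin n ⊕ Fin n)) (hF : IsIndep (whisker H) ↑F)
    (hcard : F.card = n - 1) :
    Set.ncard {M : Finset (Fin n ⊕ Fin n) | MaxIndep (whisker H) M ∧ F ⊆ M} ≤ 2 := by
  rcases Nat.eq_zero_or_pos n with rfl | hn
  · exact (Set.ncard_le_one_of_subsingleton _).trans one_le_two
  obtain ⟨i, hcov⟩ := exists_forall_ne_mem_image_index hF hcard hn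
  have hsub : {M | MaxIndep (whisker H) M ∧ F ⊆ M} ⊆ {insert (Sum.inl i) F, insert (Sum.inr i) F} :=
    fun M ⟨hM, hFM⟩ => maxIndep_eq_insert_of_forall_ne_mem_image_index hcov hM hFM
  calc Set.ncard _ ≤ Set.ncard {insert (Sum.inl i) F, insert (Sum.inr i) F} :=
        Set.ncard_le_ncard hsub (Set.toFinite _)
    _ ≤ 2 := (Set.ncard_insert_le _ _).trans (by simp)
end

section
/- For any maximal independent set F of the whiskered graph w(H), there exists a sequence of maximal independent sets F_0 = Y, F_1, ..., F_s = F, where Y = {y_1,...,y_n}, such that |F_j ∩ F_{j+1}| = n−1 for all j. Consequently, any two maximal independent sets of w(H) are connected by such a sequence (the dual graph of the independence complex is connected). -/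
/-- A sequence of maximal independent sets (facets of the independence complex)
from `F` to `F'` in which consecutive members intersect in `n - 1` elements. -/
def FacetChain {n : ℕ} (G : SimpleGraph (Fin n ⊕ Fin n))
    (F F' : Finset (Fin n ⊕ Fin n)) : Prop :=
  ∃ (s : ℕ) (c : ℕ → Finset (Fin n ⊕ Fin n)), c 0 = F ∧ c s = F' ∧
    (∀ j ≤ s, MaxIndep G (c j)) ∧ ∀ j < s, (c j ∩ c (j + 1)).card = n - 1

open Finset Sum

section aux
variable {n : ℕ} {H : SimpleGraph (Fin n)}

lemma whisker_adj_ll {i j : Fin n} : (whisker H).Adj (inl i) (inl j) ↔ H.Adj i j := by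
  simp only [whisker, SimpleGraph.fromRel_adj]
  constructor
  · rintro ⟨hne, h | h⟩ <;> rcases h with (⟨a, b, hab, h1, h2⟩ | ⟨a, h1, h2⟩) <;>
      simp_all <;> exact hab.symm
  · intro h
    exact ⟨by simp [H.ne_of_adj h], Or.inl (Or.inl ⟨i, j, h, rfl, rfl⟩)⟩

lemma whisker_adj_lr {i j : Fin n} : (whisker H).Adj (inl i) (inr j) ↔ i = j := by
  simp only [whisker, SimpleGraph.fromRel_adj]
  constructor
  · rintro ⟨hne, h | h⟩ <;> rcases h with (⟨a, b, hab, h1, h2⟩ | ⟨a, h1, h2⟩) <;> simp_all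
  · rintro rfl
    exact ⟨by simp, Or.inl (Or.inr ⟨i, rfl, rfl⟩)⟩

lemma whisker_adj_rr {i j : Fin n} : ¬ (whisker H).Adj (inr i) (inr j) := by
  simp only [whisker, SimpleGraph.fromRel_adj]
  rintro ⟨hne, h | h⟩ <;> rcases h with (⟨a, b, hab, h1, h2⟩ | ⟨a, h1, h2⟩) <;> simp_all

/-- The maximal independent set determined by an independent set `A` of `H`. -/
def MSet (A : Finset (Fin n)) : Finset (Fin n ⊕ Fin n) :=
  A.image inl ∪ Aᶜ.image inr

lemma mem_MSet_inl {A : Finset (Fin n)} {i : Fin n} : inl i ∈ MSet A ↔ i ∈ A := by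
  simp [MSet]

lemma mem_MSet_inr {A : Finset (Fin n)} {i : Fin n} : inr i ∈ MSet A ↔ i ∉ A := by
  simp [MSet]

lemma maxIndep_MSet {A : Finset (Fin n)} (hA : IsIndep H ↑A) :
    MaxIndep (whisker H) (MSet A) := by
  constructor
  · rintro u hu v hv hadj
    rcases u with i | i <;> rcases v with j | j
    · exact hA i (by simpa [mem_MSet_inl] using hu) j (by simpa [mem_MSet_inl] using hv)
        (whisker_adj_ll.mp hadj)
    · have hi : i ∈ A := by simpa [mem_MSet_inl] using hu
      have hj : j ∉ A := by simpa [mem_MSet_inr] using hv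
      exact hj (whisker_adj_lr.mp hadj ▸ hi)
    · have hi : i ∉ A := by simpa [mem_MSet_inr] using hu
      have hj : j ∈ A := by simpa [mem_MSet_inl] using hv
      exact hi ((whisker_adj_lr.mp hadj.symm).symm ▸ hj)
    · exact whisker_adj_rr hadj
  · intro F' hF' hsub
    refine Finset.Subset.antisymm hsub fun x hx => ?_
    by_contra hxM
    rcases x with i | i
    · have hi : i ∉ A := fun h => hxM (mem_MSet_inl.mpr h)
      have : inr i ∈ F' := hsub (mem_MSet_inr.mpr hi)
      exact hF' _ hx _ this (whisker_adj_lr.mpr rfl)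
    · have hi : i ∈ A := by
        by_contra h; exact hxM (mem_MSet_inr.mpr h)
      have : inl i ∈ F' := hsub (mem_MSet_inl.mpr hi)
      exact hF' _ this _ hx (whisker_adj_lr.mpr rfl)

lemma maxIndep_eq_MSet {F : Finset (Fin n ⊕ Fin n)} (hF : MaxIndep (whisker H) F) :
    ∃ A : Finset (Fin n), IsIndep H ↑A ∧ F = MSet A := by
  refine ⟨univ.filter (fun i => inl i ∈ F), ?_, ?_⟩
  · intro i hi j hj hadj
    simp only [coe_filter, Set.mem_setOf_eq] at hi hj
    exact hF.1 _ hi.2 _ hj.2 (whisker_adj_ll.mpr hadj)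
  · ext x
    rcases x with i | i
    · simp [mem_MSet_inl]
    · simp only [mem_MSet_inr, mem_filter, mem_univ, true_and]
      constructor
      · intro hr hl
        exact hF.1 _ hl _ hr (whisker_adj_lr.mpr rfl)
      · intro hl
        by_contra hr
        have hindep : IsIndep (whisker H) ↑(insert (inr i) F) := by
          intro u hu v hv hadj
          simp only [coe_insert, Set.mem_insert_iff] at hu hv
          rcases hu with rfl | hu <;> rcases hv with rfl | hv
          · exact (whisker_adj_rr hadj)
          · rcases v with j | j
            · exact hl ((whisker_adj_lr.mp hadj.symm) ▸ hv)
            · exact whisker_adj_rr hadj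
          · rcases u with j | j
            · exact hl ((whisker_adj_lr.mp hadj) ▸ hu)
            · exact whisker_adj_rr hadj
          · exact hF.1 _ hu _ hv hadj
        have := hF.2 _ hindep (subset_insert _ _)
        exact hr (this ▸ mem_insert_self _ _)

lemma MSet_inter_card {A A' : Finset (Fin n)} (h : A ⊆ A') :
    (MSet A ∩ MSet A').card = A.card + (n - A'.card) := by
  have : MSet A ∩ MSet A' = A.image inl ∪ A'ᶜ.image inr := by
    ext x
    rcases x with i | i
    · simp only [mem_inter, mem_MSet_inl, mem_union, mem_image]
      constructor
      · rintro ⟨h1, _⟩; exact Or.inl ⟨i, h1, rfl⟩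
      · rintro (⟨j, hj, hji⟩ | ⟨j, _, hji⟩)
        · cases hji; exact ⟨hj, h hj⟩
        · exact absurd hji (by simp)
    · simp only [mem_inter, mem_MSet_inr, mem_union, mem_image]
      constructor
      · rintro ⟨_, h2⟩; exact Or.inr ⟨i, by simpa using h2, rfl⟩
      · rintro (⟨j, _, hji⟩ | ⟨j, hj, hji⟩)
        · exact absurd hji (by simp)
        · cases hji; exact ⟨fun hi => (mem_compl.mp hj) (h hi), by simpa using hj⟩
  rw [this, card_union_of_disjoint, card_image_of_injective _ inl_injective,
    card_image_of_injective _ inr_injective, card_compl, Fintype.card_fin]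
  simp [Finset.disjoint_left]

lemma chain_from_Y (A : Finset (Fin n)) (hA : IsIndep H ↑A) :
    FacetChain (whisker H) (MSet (∅ : Finset (Fin n))) (MSet A) := by
  induction A using Finset.induction with
  | empty => exact ⟨0, fun _ => MSet ∅, rfl, rfl,
      fun j _ => maxIndep_MSet (by simp [IsIndep]), fun j hj => absurd hj (by omega)⟩
  | @insert a A ha ih =>
    have hAsub : IsIndep H ↑A := by
      intro u hu v hv
      exact hA u (by simp [hu]) v (by simp [hv])
    obtain ⟨s, c, hc0, hcs, hmax, hcard⟩ := ih hAsub
    refine ⟨s + 1, fun j => if j ≤ s then c j else MSet (insert a A), by simp [hc0], by simp, ?_, ?_⟩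
    · intro j hj
      by_cases h : j ≤ s
      · simpa [h] using hmax j h
      · simpa [h] using maxIndep_MSet hA
    · intro j hj
      by_cases h : j < s
      · simp only [if_pos (Nat.le_of_lt h), if_pos (by omega : j + 1 ≤ s)]
        exact hcard j h
      · have hjs : j = s := by omega
        subst hjs
        simp only [le_refl, if_pos, Nat.lt_irrefl, if_neg (by omega : ¬ j + 1 ≤ j), hcs]
        rw [MSet_inter_card (subset_insert a A), card_insert_of_notMem ha]
        have : A.card + 1 ≤ n := by
          simpa [card_insert_of_notMem ha] using card_le_card (subset_univ (insert a A))
        omega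

lemma facetChain_symm {G : SimpleGraph (Fin n ⊕ Fin n)} {F F' : Finset (Fin n ⊕ Fin n)}
    (h : FacetChain G F F') : FacetChain G F' F := by
  obtain ⟨s, c, hc0, hcs, hmax, hcard⟩ := h
  refine ⟨s, fun j => c (s - j), by simp [hcs], by simp [hc0], fun j hj => hmax _ (by omega), ?_⟩
  intro j hj
  have h1 : s - j = (s - (j + 1)) + 1 := by omega
  show (c (s - j) ∩ c (s - (j + 1))).card = n - 1
  rw [Finset.inter_comm, h1]
  exact hcard _ (by omega)

lemma facetChain_trans {G : SimpleGraph (Fin n ⊕ Fin n)} {F F' F'' : Finset (Fin n ⊕ Fin n)}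
    (h1 : FacetChain G F F') (h2 : FacetChain G F' F'') : FacetChain G F F'' := by
  obtain ⟨s1, c1, hc10, hc1s, hmax1, hcard1⟩ := h1
  obtain ⟨s2, c2, hc20, hc2s, hmax2, hcard2⟩ := h2
  refine ⟨s1 + s2, fun j => if j ≤ s1 then c1 j else c2 (j - s1), by simp [hc10], ?_, ?_, ?_⟩
  · by_cases h : s2 = 0
    · simp [h, hc1s, hc2s ▸ hc20 ▸ (h ▸ rfl : c2 s2 = c2 0)]
    · simp only [if_neg (by omega : ¬ s1 + s2 ≤ s1)]
      simpa using hc2s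
  · intro j hj
    by_cases h : j ≤ s1
    · simpa [h] using hmax1 j h
    · simpa [h] using hmax2 (j - s1) (by omega)
  · intro j hj
    by_cases h : j + 1 ≤ s1
    · simp only [if_pos (by omega : j ≤ s1), if_pos h]
      exact hcard1 j (by omega)
    · by_cases h' : j ≤ s1
      · have hjs : j = s1 := by omega
        subst hjs
        simp only [if_pos le_rfl, if_neg h, hc1s]
        have : j + 1 - j = 1 := by omega
        rw [this, ← hc20]
        exact hcard2 0 (by omega)
      · simp only [if_neg h', if_neg h]
        have : j + 1 - s1 = (j - s1) + 1 := by omega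
        rw [this]
        exact hcard2 (j - s1) (by omega)

end aux

/-- For any maximal independent set `F` of `w(H)` there is a sequence of
maximal independent sets from `Y = {y_1,...,y_n}` to `F` with consecutive
members meeting in `n - 1` elements; consequently any two maximal independent
sets of `w(H)` are connected by such a sequence. -/
theorem facetChain_from_whiskerVertices {n : ℕ} (H : SimpleGraph (Fin n)) :
    (∀ F : Finset (Fin n ⊕ Fin n), MaxIndep (whisker H) F →
      FacetChain (whisker H) (Finset.univ.image Sum.inr) F) ∧
    (∀ F F' : Finset (Fin n ⊕ Fin n), MaxIndep (whisker H) F →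
      MaxIndep (whisker H) F' → FacetChain (whisker H) F F') := by
  have hY : (MSet (∅ : Finset (Fin n))) = Finset.univ.image Sum.inr := by
    simp [MSet]
  have part1 : ∀ F : Finset (Fin n ⊕ Fin n), MaxIndep (whisker H) F →
      FacetChain (whisker H) (Finset.univ.image Sum.inr) F := by
    intro F hF
    obtain ⟨A, hA, rfl⟩ := maxIndep_eq_MSet hF
    exact hY ▸ chain_from_Y A hA
  exact ⟨part1, fun F F' hF hF' => facetChain_trans (facetChain_symm (part1 F hF)) (part1 F' hF')⟩
end

section
/- The independence complex of any whiskered graph w(H) on 2n vertices is a pseudo-manifold of dimension n−1: it is pure of dimension n−1, every (n−2)-dimensional face lies in at most two facets, and any two facets are connected by a sequence of facets in which consecutive facets intersect in a face of dimension n−2. -/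
open Sum

lemma wadj_ll {n} (H : SimpleGraph (Fin n)) (i j : Fin n) :
    (whisker H).Adj (inl i) (inl j) ↔ H.Adj i j := by
  simp only [whisker, SimpleGraph.fromRel_adj]
  constructor
  · rintro ⟨hne, h⟩
    rcases h with (⟨a,b,hab,h1,h2⟩|⟨a,h1,h2⟩) | (⟨a,b,hab,h1,h2⟩|⟨a,h1,h2⟩) <;>
      simp_all
    exact hab.symm
  · intro h
    exact ⟨by simp [H.ne_of_adj h], Or.inl (Or.inl ⟨i, j, h, rfl, rfl⟩)⟩

lemma wadj_lr {n} (H : SimpleGraph (Fin n)) (i j : Fin n) :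
    (whisker H).Adj (inl i) (inr j) ↔ i = j := by
  simp only [whisker, SimpleGraph.fromRel_adj]
  constructor
  · rintro ⟨hne, h⟩
    rcases h with (⟨a,b,hab,h1,h2⟩|⟨a,h1,h2⟩) | (⟨a,b,hab,h1,h2⟩|⟨a,h1,h2⟩) <;> simp_all
  · rintro rfl
    exact ⟨by simp, Or.inl (Or.inr ⟨i, rfl, rfl⟩)⟩

lemma wadj_rr {n} (H : SimpleGraph (Fin n)) (i j : Fin n) :
    ¬ (whisker H).Adj (inr i) (inr j) := by
  simp only [whisker, SimpleGraph.fromRel_adj]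
  rintro ⟨hne, h⟩
  rcases h with (⟨a,b,hab,h1,h2⟩|⟨a,h1,h2⟩) | (⟨a,b,hab,h1,h2⟩|⟨a,h1,h2⟩) <;> simp_all

lemma maxIndep_iff {n} (H : SimpleGraph (Fin n)) (F : Finset (Fin n ⊕ Fin n)) :
    MaxIndep (whisker H) F ↔
      IsIndep (whisker H) ↑F ∧ ∀ i : Fin n, inl i ∈ F ∨ inr i ∈ F := by
  constructor
  · rintro ⟨hind, hmax⟩
    refine ⟨hind, fun i => ?_⟩
    by_contra hc
    push_neg at hc
    obtain ⟨hl, hr⟩ := hc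
    have hind' : IsIndep (whisker H) ↑(insert (inr i) F) := by
      intro u hu v hv
      simp only [Finset.coe_insert, Set.mem_insert_iff, Finset.mem_coe] at hu hv
      rcases hu with rfl | hu <;> rcases hv with rfl | hv
      · simp
      · intro hadj
        cases v with
        | inl j =>
          have := (wadj_lr H j i).mp hadj.symm
          subst this; exact hl hv
        | inr j => exact wadj_rr H i j hadj
      · intro hadj
        cases u with
        | inl j =>
          have := (wadj_lr H j i).mp hadj
          subst this; exact hl hu
        | inr j => exact wadj_rr H j i hadj
      · exact hind u hu v hv
    have := hmax _ hind' (Finset.subset_insert _ _)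
    exact hr (this ▸ Finset.mem_insert_self _ _)
  · rintro ⟨hind, hcov⟩
    refine ⟨hind, fun F' hind' hsub => ?_⟩
    refine Finset.Subset.antisymm hsub fun v hv => ?_
    by_contra hvF
    cases v with
    | inl i =>
      have hri : inr i ∈ F := (hcov i).resolve_left (fun h => hvF h)
      exact hind' _ hv _ (hsub hri) ((wadj_lr H i i).mpr rfl)
    | inr i =>
      have hli : inl i ∈ F := (hcov i).resolve_right (fun h => hvF h)
      exact hind' _ (hsub hli) _ hv ((wadj_lr H i i).mpr rfl)

lemma indep_elim_inj {n} (H : SimpleGraph (Fin n)) {F : Finset (Fin n ⊕ Fin n)}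
    (hind : IsIndep (whisker H) ↑F) :
    ∀ a ∈ F, ∀ b ∈ F, Sum.elim id id a = Sum.elim id id b → a = b := by
  intro a ha b hb hab
  cases a with
  | inl i => cases b with
    | inl j => simp_all
    | inr j =>
      simp only [Sum.elim_inl, Sum.elim_inr, id] at hab
      exact absurd ((wadj_lr H i j).mpr hab) (hind _ ha _ hb)
  | inr i => cases b with
    | inl j =>
      simp only [Sum.elim_inl, Sum.elim_inr, id] at hab
      exact absurd ((wadj_lr H j i).mpr hab.symm) (hind _ hb _ ha)
    | inr j => simp_all

lemma card_of_max {n} (H : SimpleGraph (Fin n)) {F : Finset (Fin n ⊕ Fin n)}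
    (hF : MaxIndep (whisker H) F) : F.card = n := by
  rw [maxIndep_iff] at hF
  obtain ⟨hind, hcov⟩ := hF
  have : F.card = (Finset.univ : Finset (Fin n)).card :=
    Finset.card_bij (fun a _ => Sum.elim id id a)
      (fun a _ => Finset.mem_univ _) (indep_elim_inj H hind)
      (fun i _ => by
        rcases hcov i with h | h
        · exact ⟨inl i, h, rfl⟩
        · exact ⟨inr i, h, rfl⟩)
  simpa using this

lemma swap_lemma {n} (H : SimpleGraph (Fin n)) {F : Finset (Fin n ⊕ Fin n)}
    (hF : MaxIndep (whisker H) F) {i : Fin n} (hi : inl i ∈ F) :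
    MaxIndep (whisker H) (insert (inr i) (F.erase (inl i))) ∧
      (F ∩ insert (inr i) (F.erase (inl i))).card = n - 1 := by
  rw [maxIndep_iff] at hF
  obtain ⟨hind, hcov⟩ := hF
  have hri : inr i ∉ F := fun h => hind _ hi _ h ((wadj_lr H i i).mpr rfl)
  set F' := insert (inr i) (F.erase (inl i)) with hF'def
  have hind' : IsIndep (whisker H) ↑F' := by
    intro u hu v hv
    simp only [hF'def, Finset.coe_insert, Set.mem_insert_iff, Finset.mem_coe,
      Finset.mem_erase] at hu hv
    rcases hu with rfl | ⟨hu1, hu2⟩ <;> rcases hv with rfl | ⟨hv1, hv2⟩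
    · simp
    · intro hadj
      cases v with
      | inl j =>
        have := (wadj_lr H j i).mp hadj.symm
        subst this; exact hv1 rfl
      | inr j => exact wadj_rr H i j hadj
    · intro hadj
      cases u with
      | inl j =>
        have := (wadj_lr H j i).mp hadj
        subst this; exact hu1 rfl
      | inr j => exact wadj_rr H j i hadj
    · exact hind u hu2 v hv2
  constructor
  · rw [maxIndep_iff]
    refine ⟨hind', fun k => ?_⟩
    by_cases hk : k = i
    · subst hk; exact Or.inr (Finset.mem_insert_self _ _)
    · rcases hcov k with h | h
      · exact Or.inl (Finset.mem_insert_of_mem (Finset.mem_erase.mpr ⟨by simp [hk], h⟩))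
      · exact Or.inr (Finset.mem_insert_of_mem (Finset.mem_erase.mpr ⟨by simp, h⟩))
  · have heq : F ∩ F' = F.erase (inl i) := by
      ext a
      simp only [hF'def, Finset.mem_inter, Finset.mem_insert, Finset.mem_erase]
      constructor
      · rintro ⟨haF, rfl | ⟨h1, h2⟩⟩
        · exact absurd haF hri
        · exact ⟨h1, haF⟩
      · rintro ⟨h1, h2⟩
        exact ⟨h2, Or.inr ⟨h1, h2⟩⟩
    rw [heq, Finset.card_erase_of_mem hi,
      card_of_max H ((maxIndep_iff H F).mpr ⟨hind, hcov⟩)]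

lemma chain_refl {n} (H : SimpleGraph (Fin n)) {F : Finset (Fin n ⊕ Fin n)}
    (hF : MaxIndep (whisker H) F) : FacetChain (whisker H) F F :=
  ⟨0, fun _ => F, rfl, rfl, fun _ _ => hF, fun j hj => absurd hj (Nat.not_lt_zero j)⟩

lemma chain_single {n} (H : SimpleGraph (Fin n)) {F F' : Finset (Fin n ⊕ Fin n)}
    (hF : MaxIndep (whisker H) F) (hF' : MaxIndep (whisker H) F')
    (hcard : (F ∩ F').card = n - 1) : FacetChain (whisker H) F F' := by
  refine ⟨1, fun j => if j = 0 then F else F', by simp, by simp, fun j hj => ?_, fun j hj => ?_⟩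
  · by_cases h : j = 0 <;> simp [h, hF, hF']
  · interval_cases j
    simpa using hcard

lemma chain_trans {n} {G : SimpleGraph (Fin n ⊕ Fin n)} {F₁ F₂ F₃ : Finset (Fin n ⊕ Fin n)}
    (h12 : FacetChain G F₁ F₂) (h23 : FacetChain G F₂ F₃) : FacetChain G F₁ F₃ := by
  obtain ⟨s, c, hc0, hcs, hmax, hint⟩ := h12
  obtain ⟨s', c', hc0', hcs', hmax', hint'⟩ := h23
  refine ⟨s + s', fun j => if j ≤ s then c j else c' (j - s), by simp [hc0], ?_, ?_, ?_⟩
  · by_cases h : s + s' ≤ s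
    · have : s' = 0 := by omega
      simp only [if_pos h]
      rw [show s + s' = s by omega, hcs, ← hc0']
      exact this ▸ hcs'
    · simp only [if_neg h]
      rw [show s + s' - s = s' by omega, hcs']
  · intro j hj
    by_cases h : j ≤ s
    · simpa [h] using hmax j h
    · simpa [h] using hmax' (j - s) (by omega)
  · intro j hj
    by_cases h1 : j + 1 ≤ s
    · simp only [if_pos (by omega : j ≤ s), if_pos h1]
      exact hint j (by omega)
    · by_cases h2 : j ≤ s
      · have hjs : j = s := by omega
        have hs' : 0 < s' := by omega
        simp only [if_pos h2, if_neg h1]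
        rw [hjs, show s + 1 - s = 1 by omega, hcs, ← hc0']
        exact hint' 0 hs'
      · simp only [if_neg h2, if_neg h1]
        rw [show j + 1 - s = (j - s) + 1 by omega]
        exact hint' (j - s) (by omega)

lemma chain_symm {n} {G : SimpleGraph (Fin n ⊕ Fin n)} {F₁ F₂ : Finset (Fin n ⊕ Fin n)}
    (h : FacetChain G F₁ F₂) : FacetChain G F₂ F₁ := by
  obtain ⟨s, c, hc0, hcs, hmax, hint⟩ := h
  refine ⟨s, fun j => c (s - j), by simpa, by simpa using hc0, fun j hj => hmax _ (by omega), ?_⟩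
  intro j hj
  have he : (fun j => c (s - j)) j ∩ (fun j => c (s - j)) (j + 1)
      = c ((s - (j + 1)) + 1) ∩ c (s - (j + 1)) := by
    simp only
    rw [show s - j = (s - (j + 1)) + 1 by omega]
  rw [he, Finset.inter_comm]
  exact hint (s - (j + 1)) (by omega)

lemma chain_to_inr {n} (H : SimpleGraph (Fin n)) :
    ∀ (m : ℕ) (F : Finset (Fin n ⊕ Fin n)), MaxIndep (whisker H) F →
      (F.filter (fun v => v.isLeft)).card = m →
      FacetChain (whisker H) F (Finset.univ.image inr) := by
  intro m
  induction m using Nat.strong_induction_on with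
  | _ m ih =>
    intro F hF hm
    rcases Nat.eq_zero_or_pos m with rfl | hpos
    · have hsub : F ⊆ Finset.univ.image inr := by
        intro v hv
        cases v with
        | inl i =>
          exfalso
          have : inl i ∈ F.filter (fun v => v.isLeft) := by simp [hv]
          rw [Finset.card_eq_zero.mp hm] at this
          simp at this
        | inr i => simp
      have hcardR : (Finset.univ.image (inr : Fin n → Fin n ⊕ Fin n)).card = n := by
        rw [Finset.card_image_of_injective _ Sum.inr_injective]; simp
      have : F = Finset.univ.image inr :=
        Finset.eq_of_subset_of_card_le hsub (by rw [card_of_max H hF, hcardR])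
      rw [this] at hF ⊢
      exact chain_refl H hF
    · have hne : (F.filter (fun v => v.isLeft)).Nonempty :=
        Finset.card_pos.mp (hm ▸ hpos)
      obtain ⟨v, hv⟩ := hne
      rw [Finset.mem_filter] at hv
      obtain ⟨hvF, hvL⟩ := hv
      cases v with
      | inr i => simp at hvL
      | inl i =>
        obtain ⟨hF', hcard⟩ := swap_lemma H hF hvF
        have hfilt : (insert (inr i) (F.erase (inl i))).filter (fun v => v.isLeft)
            = (F.filter (fun v => v.isLeft)).erase (inl i) := by
          ext a
          simp only [Finset.mem_filter, Finset.mem_insert, Finset.mem_erase]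
          constructor
          · rintro ⟨rfl | ⟨h1, h2⟩, h3⟩
            · simp at h3
            · exact ⟨h1, h2, h3⟩
          · rintro ⟨h1, h2, h3⟩
            exact ⟨Or.inr ⟨h1, h2⟩, h3⟩
        have hmem : inl i ∈ F.filter (fun v => v.isLeft) := by simp [hvF]
        have hcard' : ((insert (inr i) (F.erase (inl i))).filter
            (fun v => v.isLeft)).card = m - 1 := by
          rw [hfilt, Finset.card_erase_of_mem hmem, hm]
        exact chain_trans (chain_single H hF hF' hcard)
          (ih (m - 1) (by omega) _ hF' hcard')

/-- The independence complex of any whiskered graph `w(H)` on `2n` vertices is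
a pseudo-manifold of dimension `n - 1`: it is pure of dimension `n - 1` (every
facet has `n` vertices), every `(n-2)`-dimensional face (independent set with
`n - 1` elements) lies in at most two facets, and any two facets are connected
by a sequence of facets in which consecutive ones intersect in a face of
dimension `n - 2` (i.e. with `n - 1` elements). -/
theorem ind_whisker_pseudomanifold {n : ℕ} (H : SimpleGraph (Fin n)) :
    (∀ F : Finset (Fin n ⊕ Fin n), MaxIndep (whisker H) F → F.card = n) ∧
    (∀ F : Finset (Fin n ⊕ Fin n), IsIndep (whisker H) ↑F → F.card = n - 1 →
      Set.ncard {M : Finset (Fin n ⊕ Fin n) | MaxIndep (whisker H) M ∧ F ⊆ M} ≤ 2) ∧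
    (∀ F F' : Finset (Fin n ⊕ Fin n), MaxIndep (whisker H) F →
      MaxIndep (whisker H) F' → FacetChain (whisker H) F F') := by
  refine ⟨fun F hF => card_of_max H hF, ?_, fun F F' hF hF' =>
    chain_trans (chain_to_inr H _ F hF rfl) (chain_symm (chain_to_inr H _ F' hF' rfl))⟩
  intro F hind hcard
  rcases Nat.eq_zero_or_pos n with rfl | hn
  · have : {M : Finset (Fin 0 ⊕ Fin 0) | MaxIndep (whisker H) M ∧ F ⊆ M} ⊆ {∅} := by
      intro M hM
      simp only [Set.mem_setOf_eq] at hM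
      have := card_of_max H hM.1
      simp only [Set.mem_singleton_iff]
      exact Finset.card_eq_zero.mp this
    calc Set.ncard _ ≤ Set.ncard {(∅ : Finset (Fin 0 ⊕ Fin 0))} :=
          Set.ncard_le_ncard this (Set.finite_singleton _)
      _ ≤ 2 := by simp
  · -- find missing index
    have himg : (F.image (Sum.elim id id)).card = n - 1 := by
      rw [Finset.card_image_iff.mpr ?_, hcard]
      intro a ha b hb hab
      exact indep_elim_inj H hind a ha b hb hab
    have hex : ∃ i0 : Fin n, i0 ∉ F.image (Sum.elim id id) := by
      by_contra hc
      push_neg at hc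
      have : (Finset.univ : Finset (Fin n)) ⊆ F.image (Sum.elim id id) :=
        fun i _ => hc i
      have := Finset.card_le_card this
      simp only [Finset.card_univ, Fintype.card_fin, himg] at this
      omega
    obtain ⟨i0, hi0⟩ := hex
    have hsub : {M : Finset (Fin n ⊕ Fin n) | MaxIndep (whisker H) M ∧ F ⊆ M} ⊆
        {insert (inl i0) F, insert (inr i0) F} := by
      rintro M ⟨hM, hFM⟩
      have hMcard := card_of_max H hM
      have hcov := ((maxIndep_iff H M).mp hM).2 i0
      have key : ∀ v : Fin n ⊕ Fin n, Sum.elim id id v = i0 → v ∈ M →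
          M = insert v F := by
        intro v hve hvM
        have hvF : v ∉ F := fun h => hi0 (Finset.mem_image.mpr ⟨v, h, hve⟩)
        have h1 : insert v F ⊆ M := Finset.insert_subset hvM hFM
        have h2 : (insert v F).card = n := by
          rw [Finset.card_insert_of_notMem hvF, hcard]; omega
        exact (Finset.eq_of_subset_of_card_le h1 (by rw [hMcard, h2])).symm
      rcases hcov with h | h
      · exact Or.inl (key (inl i0) rfl h)
      · exact Or.inr (key (inr i0) rfl h)
    calc Set.ncard _ ≤ Set.ncard {insert (inl i0) F, insert (inr i0) F} :=
          Set.ncard_le_ncard hsub ((Set.finite_singleton _).insert _)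
      _ ≤ 2 := by
          apply le_trans (Set.ncard_insert_le _ _)
          simp
end

section
/- Let R = K[x_1,...,x_n] with char(K) = 0 and let I ⊆ R be a monomial ideal such that A = R/I is Artinian and level of socle degree t. Write I = Ann(m_1) ∩ ... ∩ Ann(m_s) for the monomials m_1,...,m_s of degree t not in I (under the contraction/inverse system action). Then for ℓ = x_1 + ... + x_n and any k < t/2, the map ×ℓ^{t−2k} : A_k → A_{t−k} is injective. -/
/-!
Suppose `ℓ^(t-2k) f ∈ I` but `f ∉ I`, and pick a monomial `x^c` of `f` outside `I`. The level
hypothesis lets us climb from `c` to a monomial `x^a ∉ I` of degree `t` with `c ≤ a`. Now let `f`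
act on `X^a` by differentiation, as in Macaulay's inverse system: this kills exactly the monomials
not dividing `x^a`, so `u = f(∂) X^a ≠ 0`, while `(∑ ∂ⱼ)^(t-2k) u = (ℓ^(t-2k) f)(∂) X^a = 0`.
The operators `E = ∑ (aⱼ xⱼ - xⱼ² ∂ⱼ)`, `F = ∑ ∂ⱼ`, `H = ∑ (2 xⱼ ∂ⱼ - aⱼ)` form an `sl₂`-triple,
being a sum of commuting copies of the standard triple in the Weyl algebra. Since `u` is an
`H`-eigenvector of weight `t - 2k` on which `E` is nilpotent (it raises the degree and keeps the
support below `a`), `sl₂` theory forbids `F^(t-2k) u = 0` unless `u = 0`.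
-/

open LieModule MvPolynomial

lemma LieModule.toEnd_pow_succ_apply {R L M : Type*} [CommRing R] [LieRing L] [LieAlgebra R L]
    [AddCommGroup M] [Module R M] [LieRingModule L M] [LieModule R L M] (x : L) (m : M) (n : ℕ) :
    (toEnd R L M x ^ (n + 1)) m = ⁅x, (toEnd R L M x ^ n) m⁆ := by
  rw [pow_succ', Module.End.mul_apply, toEnd_apply_apply]

namespace IsSl2Triple

variable {R L M : Type*} [CommRing R] [LieRing L] [LieAlgebra R L] [AddCommGroup M] [Module R M]
  [LieRingModule L M] [LieModule R L M] {h e f : L} {m : M} {μ : R}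

lemma lie_h_pow_toEnd_f (t : IsSl2Triple h e f) (hm : ⁅h, m⁆ = μ • m) (n : ℕ) :
    ⁅h, (toEnd R L M f ^ n) m⁆ = (μ - 2 * n) • (toEnd R L M f ^ n) m := by
  have := t.symm.lie_h_pow_toEnd_e (M := M) (m := m) (μ := -μ) (by rw [neg_lie, hm, neg_smul]) n
  rw [neg_lie, neg_eq_iff_eq_neg, ← neg_smul] at this
  rw [this]
  congr 1
  ring

lemma lie_e_pow_succ_toEnd_f (t : IsSl2Triple h e f) (hm : ⁅h, m⁆ = μ • m) (n : ℕ) :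
    ⁅e, (toEnd R L M f ^ (n + 1)) m⁆
      = (toEnd R L M f ^ (n + 1)) ⁅e, m⁆ + ((n + 1) * (μ - n)) • (toEnd R L M f ^ n) m := by
  induction n with
  | zero => simp [leibniz_lie e f m, t.lie_e_f, hm, add_comm]
  | succ n ih =>
    rw [toEnd_pow_succ_apply (n := n + 1), leibniz_lie e, t.lie_e_f, t.lie_h_pow_toEnd_f hm, ih,
      lie_add, lie_smul, ← toEnd_pow_succ_apply, ← toEnd_pow_succ_apply, add_left_comm,
      ← add_smul]
    congr 2
    push_cast
    ring

/-- By induction on `r`: `⁅e, m⁆` has weight `n + 2` and is killed by `f ^ (n + 2)`, so it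
vanishes; then `m` is primitive of weight `n`, and `f ^ n` is injective on such vectors. -/
theorem eq_zero_of_pow_toEnd_eq_zero [IsDomain R] [CharZero R] [Module.IsTorsionFree R M]
    (t : IsSl2Triple h e f) {n r : ℕ} (hh : ⁅h, m⁆ = (n : R) • m)
    (he : (toEnd R L M e ^ r) m = 0) (hf : (toEnd R L M f ^ n) m = 0) : m = 0 := by
  induction r generalizing n m with
  | zero => simpa using he
  | succ r ih =>
    have hf' : ∀ p, (toEnd R L M f ^ (n + p)) m = 0 := fun p => by
      rw [add_comm, pow_add, Module.End.mul_apply, hf, map_zero]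
    have hem : ⁅e, m⁆ = 0 := by
      refine ih (n := n + 2) ?_ ?_ ?_
      · simpa using t.lie_h_pow_toEnd_e hh 1
      · rwa [pow_succ, Module.End.mul_apply, toEnd_apply_apply] at he
      · have := t.lie_e_pow_succ_toEnd_f hh (n + 1)
        rwa [hf' 1, show n + 1 + 1 = n + 2 from rfl, hf' 2, lie_zero, smul_zero, add_zero,
          eq_comm] at this
    by_contra hm
    exact (HasPrimitiveVectorWith.pow_toEnd_f_ne_zero_of_eq_nat (t := t) ⟨hm, hh, hem⟩ rfl le_rfl) hf

lemma sum {ι : Type*} [Fintype ι] {h e f : ι → L}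
    (hef : ∀ i, ⁅e i, f i⁆ = h i) (hhe : ∀ i, ⁅h i, e i⁆ = 2 • e i)
    (hhf : ∀ i, ⁅h i, f i⁆ = -(2 • f i))
    (hcomm : Pairwise fun i j => ⁅e i, f j⁆ = 0 ∧ ⁅h i, e j⁆ = 0 ∧ ⁅h i, f j⁆ = 0)
    (h0 : ∑ i, h i ≠ 0) : IsSl2Triple (∑ i, h i) (∑ i, e i) (∑ i, f i) := by
  have lie_sum_sum {x y : ι → L} (hxy : Pairwise fun i j => ⁅x i, y j⁆ = 0) :
      ⁅∑ i, x i, ∑ j, y j⁆ = ∑ i, ⁅x i, y i⁆ := by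
    classical
    rw [sum_lie]
    refine Finset.sum_congr rfl fun i _ => ?_
    rw [lie_sum, Finset.sum_eq_single i (fun j _ hji => hxy hji.symm) (by simp)]
  refine ⟨h0, ?_, ?_, ?_⟩
  · rw [lie_sum_sum fun i j hij => (hcomm hij).1]
    simp [hef]
  · rw [lie_sum_sum fun i j hij => (hcomm hij).2.1, Finset.smul_sum]
    simp [hhe]
  · rw [lie_sum_sum fun i j hij => (hcomm hij).2.2, Finset.smul_sum, ← Finset.sum_neg_distrib]
    simp [hhf]

end IsSl2Triple

section WeylAlgebra

attribute [local instance] LieRing.ofAssociativeRing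

theorem IsSl2Triple.eq_zero_of_pow_eq_zero {K M : Type*} [Field K] [CharZero K] [AddCommGroup M]
    [Module K M] {H E F : Module.End K M} (t : IsSl2Triple H E F) {n r : ℕ} {m : M}
    (hh : H m = (n : K) • m) (he : (E ^ r) m = 0) (hf : (F ^ n) m = 0) : m = 0 :=
  t.eq_zero_of_pow_toEnd_eq_zero (M := M) (R := K) hh (by simpa [toEnd_module_end] using he)
    (by simpa [toEnd_module_end] using hf)

variable {A : Type*} [Ring A] (a : ℕ) {x y z : A}

/-- With `weylH` below, the `sl₂`-triple `(2xy - a, ax - x²y, y)` of the Weyl algebra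
`⁅y, x⁆ = 1`; for `x = X` and `y = ∂/∂X` it acts on the span of `1, X, …, X^a`. -/
def weylE (a : ℕ) (x y : A) : A := a • x - x * x * y

def weylH (a : ℕ) (x y : A) : A := 2 • (x * y) - a

section

variable (h : ⁅y, x⁆ = 1)
include h

lemma lie_weylE_right : ⁅weylE a x y, y⁆ = weylH a x y := by
  have hδ : y * x - x * y - 1 = 0 := by rw [← Ring.lie_def, h, sub_self]
  have h1 : ⁅x, y⁆ = -1 := by rw [← lie_skew, h]
  have h2 : ⁅x * x * y, y⁆ = -(2 • (x * y)) := by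
    rw [← sub_eq_zero]
    calc _ = -((y * x - x * y - 1) * x * y + x * (y * x - x * y - 1) * y) := by
          rw [Ring.lie_def]; noncomm_ring
      _ = 0 := by rw [hδ]; noncomm_ring
  rw [weylE, weylH, sub_lie, nsmul_lie, h1, h2]
  simp [sub_eq_add_neg, add_comm]

lemma lie_weylH_right : ⁅weylH a x y, y⁆ = -(2 • y) := by
  have hδ : y * x - x * y - 1 = 0 := by rw [← Ring.lie_def, h, sub_self]
  have h2 : ⁅x * y, y⁆ = -y := by
    rw [← sub_eq_zero]
    calc _ = -((y * x - x * y - 1) * y) := by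
          rw [Ring.lie_def]; noncomm_ring
      _ = 0 := by rw [hδ]; noncomm_ring
  rw [weylH, sub_lie, nsmul_lie, h2, (Nat.cast_commute a y).lie_eq]
  simp

lemma lie_weylH_weylE : ⁅weylH a x y, weylE a x y⁆ = 2 • weylE a x y := by
  have hδ : y * x - x * y - 1 = 0 := by rw [← Ring.lie_def, h, sub_self]
  have h1 : ⁅x * y, x⁆ = x := by
    rw [← sub_eq_zero]
    calc _ = x * (y * x - x * y - 1) := by
          rw [Ring.lie_def]; noncomm_ring
      _ = 0 := by rw [hδ]; noncomm_ring
  have h2 : ⁅x * y, x * x * y⁆ = x * x * y := by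
    rw [← sub_eq_zero]
    calc _ = x * (y * x - x * y - 1) * x * y := by
          rw [Ring.lie_def]; noncomm_ring
      _ = 0 := by rw [hδ]; noncomm_ring
  rw [weylH, sub_lie, nsmul_lie, (Nat.cast_commute a (weylE a x y)).lie_eq, weylE, lie_sub,
    lie_nsmul, h1, h2]
  simp

end

lemma Commute.weylE_left (hx : Commute x z) (hy : Commute y z) : Commute (weylE a x y) z :=
  (hx.smul_left a).sub_left ((hx.mul_left hx).mul_left hy)

lemma Commute.weylH_left (hx : Commute x z) (hy : Commute y z) : Commute (weylH a x y) z :=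
  ((hx.mul_left hy).smul_left 2).sub_left (Nat.cast_commute a z)

theorem isSl2Triple_sum_weyl {ι : Type*} [Fintype ι] (a : ι → ℕ) {x y : ι → A}
    (hxy : ∀ i, ⁅y i, x i⁆ = 1)
    (hcomm : Pairwise fun i j => Commute (x i) (x j) ∧ Commute (x i) (y j) ∧ Commute (y i) (y j))
    (h0 : ∑ i, weylH (a i) (x i) (y i) ≠ 0) :
    IsSl2Triple (∑ i, weylH (a i) (x i) (y i)) (∑ i, weylE (a i) (x i) (y i)) (∑ i, y i) := by
  refine IsSl2Triple.sum (fun i => lie_weylE_right _ (hxy i)) (fun i => lie_weylH_weylE _ (hxy i))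
    (fun i => lie_weylH_right _ (hxy i)) (fun i j hij => ?_) h0
  obtain ⟨hxx, hxy', hyy⟩ := hcomm hij
  have hyx : Commute (y i) (x j) := (hcomm hij.symm).2.1.symm
  have hHy : Commute (weylH (a i) (x i) (y i)) (y j) := hxy'.weylH_left _ hyy
  have hHx : Commute (weylH (a i) (x i) (y i)) (x j) := hxx.weylH_left _ hyx
  exact ⟨(hxy'.weylE_left _ hyy).lie_eq, (hHx.symm.weylE_left _ hHy.symm).symm.lie_eq, hHy.lie_eq⟩

end WeylAlgebra

namespace MvPolynomial

variable {σ R : Type*} [CommRing R]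

lemma pderiv_pderiv_comm (i j : σ) (p : MvPolynomial σ R) :
    pderiv i (pderiv j p) = pderiv j (pderiv i p) := by
  have h : ⁅(pderiv i : Derivation R (MvPolynomial σ R) (MvPolynomial σ R)), pderiv j⁆ = 0 :=
    derivation_ext fun k => by
      classical
      rw [Derivation.commutator_apply]
      simp [pderiv_X, Pi.single_apply, apply_ite]
  rw [← sub_eq_zero, ← Derivation.commutator_apply, h]
  rfl

def boxSlice (a : σ →₀ ℕ) (d : ℕ) : Set (σ →₀ ℕ) := {b | b ≤ a ∧ b.degree = d}

lemma isHomogeneous_of_mem_boxSlice {a : σ →₀ ℕ} {d : ℕ} {p : MvPolynomial σ R}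
    (hp : p ∈ restrictSupport R (boxSlice a d)) : p.IsHomogeneous d := fun b hb => by
  rw [Pi.one_def, ← Finsupp.degree_eq_weight_one]
  exact (hp (mem_support_iff.mpr hb)).2

section Sl2Action

attribute [local instance] LieRing.ofAssociativeRing

variable (R) in
noncomputable def mulXOp (j : σ) : Module.End R (MvPolynomial σ R) := LinearMap.mulLeft R (X j)

variable (R) in
noncomputable def pderivOp (j : σ) : Module.End R (MvPolynomial σ R) := (pderiv j).toLinearMap

@[simp] lemma mulXOp_apply (j : σ) (p : MvPolynomial σ R) : mulXOp R j p = X j * p := rfl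

@[simp] lemma pderivOp_apply (j : σ) (p : MvPolynomial σ R) : pderivOp R j p = pderiv j p := rfl

lemma lie_pderivOp_mulXOp (j : σ) : ⁅pderivOp R j, mulXOp R j⁆ = 1 :=
  LinearMap.ext fun p => by simp [Ring.lie_def]

lemma commute_mulXOp (i j : σ) : Commute (mulXOp R i) (mulXOp R j) :=
  LinearMap.ext fun p => by simp [mul_left_comm]

lemma commute_mulXOp_pderivOp {i j : σ} (h : i ≠ j) : Commute (mulXOp R i) (pderivOp R j) :=
  LinearMap.ext fun p => by simp [pderiv_X_of_ne h]

lemma commute_pderivOp (i j : σ) : Commute (pderivOp R i) (pderivOp R j) :=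
  LinearMap.ext fun p => by simp [pderiv_pderiv_comm i j]

variable [Fintype σ]

noncomputable def sl2E (a : σ →₀ ℕ) : Module.End R (MvPolynomial σ R) :=
  ∑ j, weylE (a j) (mulXOp R j) (pderivOp R j)

variable (σ R) in
noncomputable def sl2F : Module.End R (MvPolynomial σ R) := ∑ j, pderivOp R j

noncomputable def sl2H (a : σ →₀ ℕ) : Module.End R (MvPolynomial σ R) :=
  ∑ j, weylH (a j) (mulXOp R j) (pderivOp R j)

lemma sl2H_apply_of_isHomogeneous (a : σ →₀ ℕ) {p : MvPolynomial σ R} {d : ℕ}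
    (hp : p.IsHomogeneous d) : sl2H a p = (2 * (d : R) - a.degree) • p := by
  simp only [sl2H, weylH, LinearMap.sum_apply, LinearMap.sub_apply, LinearMap.smul_apply,
    Module.End.mul_apply, mulXOp_apply, pderivOp_apply, Module.End.natCast_apply,
    Finset.sum_sub_distrib, ← Finset.smul_sum, hp.sum_X_mul_pderiv, Finsupp.degree_eq_sum]
  rw [sub_smul, mul_smul, Nat.cast_sum, Finset.sum_smul]
  simp [Nat.cast_smul_eq_nsmul, two_smul]

lemma sl2H_ne_zero [IsDomain R] [CharZero R] {a : σ →₀ ℕ} (ha : a ≠ 0) :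
    sl2H (R := R) a ≠ 0 := by
  intro h
  have := sl2H_apply_of_isHomogeneous (R := R) a (isHomogeneous_one σ R)
  rw [h, LinearMap.zero_apply, Nat.cast_zero, mul_zero, zero_sub, eq_comm, smul_eq_zero] at this
  simp [(Finsupp.degree_eq_zero_iff a).not.mpr ha] at this

theorem isSl2Triple_sl2 [IsDomain R] [CharZero R] {a : σ →₀ ℕ} (ha : a ≠ 0) :
    IsSl2Triple (sl2H a) (sl2E a) (sl2F σ R) :=
  isSl2Triple_sum_weyl a (fun j => lie_pderivOp_mulXOp j)
    (fun i j hij => ⟨commute_mulXOp i j, commute_mulXOp_pderivOp hij, commute_pderivOp i j⟩)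
    (sl2H_ne_zero ha)

end Sl2Action

variable [Fintype σ]

lemma sl2E_monomial (a b : σ →₀ ℕ) (r : R) :
    sl2E a (monomial b r) = ∑ j, monomial (b + Finsupp.single j 1) (((a j : R) - b j) * r) := by
  simp only [sl2E, weylE, LinearMap.sum_apply, LinearMap.sub_apply, LinearMap.smul_apply,
    Module.End.mul_apply, mulXOp_apply, pderivOp_apply, X_mul_pderiv_monomial, mul_smul_comm]
  refine Finset.sum_congr rfl fun j _ => ?_
  rw [X, monomial_mul, one_mul, add_comm, smul_monomial, smul_monomial, ← map_sub]
  congr 1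
  simp only [nsmul_eq_mul]
  ring

lemma sl2E_mem_boxSlice {a : σ →₀ ℕ} {d : ℕ} {p : MvPolynomial σ R}
    (hp : p ∈ restrictSupport R (boxSlice a d)) :
    sl2E a p ∈ restrictSupport R (boxSlice a (d + 1)) := by
  suffices restrictSupport R (boxSlice a d) ≤
      (restrictSupport R (boxSlice a (d + 1))).comap (sl2E a) from this hp
  rw [restrictSupport_eq_span, Submodule.span_le]
  rintro _ ⟨b, ⟨hba, hbd⟩, rfl⟩
  rw [SetLike.mem_coe, Submodule.mem_comap, sl2E_monomial]
  refine Submodule.sum_mem _ fun j _ => (monomial_mem_restrictSupport R).mpr ?_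
  rcases (hba j).lt_or_eq with hlt | heq
  · refine .inl ⟨fun i => ?_, by simp [hbd]⟩
    rcases eq_or_ne i j with rfl | hij
    · simpa using hlt
    · simpa [Finsupp.single_apply, Ne.symm hij] using hba i
  · exact .inr (by simp [heq])

lemma sl2E_pow_eq_zero {a : σ →₀ ℕ} {d r : ℕ} {p : MvPolynomial σ R}
    (hp : p ∈ restrictSupport R (boxSlice a d)) (hr : a.degree < d + r) :
    (sl2E a ^ r) p = 0 := by
  induction r generalizing d p with
  | zero =>
    have : boxSlice a d = ∅ := Set.eq_empty_of_forall_notMem fun b hb => by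
      have := Finsupp.degree_mono hb.1
      simp only [boxSlice, Set.mem_ofPred_eq] at hb
      omega
    rwa [mem_restrictSupport_iff, this, Set.subset_empty_iff, Finset.coe_eq_empty,
      support_eq_empty] at hp
  | succ r ih =>
    rw [pow_succ, Module.End.mul_apply]
    exact ih (sl2E_mem_boxSlice hp) (by omega)

def multiDescFactorial (a c : σ →₀ ℕ) : ℕ := ∏ i, (a i).descFactorial (c i)

lemma multiDescFactorial_eq_zero_iff {a c : σ →₀ ℕ} : multiDescFactorial a c = 0 ↔ ¬ c ≤ a := by
  simp [multiDescFactorial, Finset.prod_eq_zero_iff, Nat.descFactorial_eq_zero_iff_lt,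
    Finsupp.le_def]

lemma multiDescFactorial_add_single (a c : σ →₀ ℕ) (j : σ) :
    multiDescFactorial a (c + Finsupp.single j 1) = (a j - c j) * multiDescFactorial a c := by
  classical
  rw [multiDescFactorial, multiDescFactorial, Fintype.prod_eq_mul_prod_compl j,
    Fintype.prod_eq_mul_prod_compl j, ← mul_assoc]
  congr 1
  · simp [Nat.descFactorial_succ]
  · exact Finset.prod_congr rfl fun i hi => by
      simp [Ne.symm (Finset.mem_compl.mp hi ∘ Finset.mem_singleton.mpr)]

/-- `diffAction a f = f(∂) X^a`: differentiation gives `∂^c X^a = (a! / (a - c)!) X^(a - c)`,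
where the truncated `a - c` is harmless because the coefficient vanishes unless `c ≤ a`. -/
noncomputable def diffAction (a : σ →₀ ℕ) : Module.End R (MvPolynomial σ R) :=
  (basisMonomials σ R).constr R fun c => monomial (a - c) (multiDescFactorial a c : R)

lemma diffAction_monomial (a c : σ →₀ ℕ) (r : R) :
    diffAction a (monomial c r) = monomial (a - c) (multiDescFactorial a c * r) := by
  calc diffAction a (monomial c r) = r • diffAction a (basisMonomials σ R c) := by
        rw [coe_basisMonomials, ← map_smul, smul_monomial, smul_eq_mul, mul_one]
    _ = _ := by rw [diffAction, Module.Basis.constr_basis, smul_monomial, smul_eq_mul, mul_comm]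

lemma diffAction_X_mul (a : σ →₀ ℕ) (j : σ) (p : MvPolynomial σ R) :
    diffAction a (X j * p) = pderiv j (diffAction a p) := by
  induction p using MvPolynomial.induction_on' with
  | monomial c r =>
    rw [X, monomial_mul, one_mul, diffAction_monomial, diffAction_monomial, pderiv_monomial,
      add_comm, tsub_add_eq_tsub_tsub, multiDescFactorial_add_single, Finsupp.tsub_apply]
    push_cast
    congr 1
    ring
  | add p q hp hq => simp only [mul_add, map_add, hp, hq]

lemma diffAction_sum_X_pow_mul (a : σ →₀ ℕ) (m : ℕ) (p : MvPolynomial σ R) :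
    diffAction a ((∑ j, X j) ^ m * p) = (sl2F σ R ^ m) (diffAction a p) := by
  induction m with
  | zero => simp
  | succ m ih =>
    rw [pow_succ', mul_assoc, Finset.sum_mul, map_sum, pow_succ', Module.End.mul_apply, ← ih]
    simp [sl2F, diffAction_X_mul]

lemma coeff_diffAction (a d : σ →₀ ℕ) (p : MvPolynomial σ R) :
    coeff d (diffAction a p)
      = if d ≤ a then multiDescFactorial a (a - d) * coeff (a - d) p else 0 := by
  classical
  induction p using MvPolynomial.induction_on' with
  | monomial c r =>
    rw [diffAction_monomial, coeff_monomial, coeff_monomial]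
    by_cases hda : d ≤ a
    · rw [if_pos hda]
      by_cases hca : c ≤ a
      · have : a - c = d ↔ c = a - d := by
          constructor <;> rintro rfl
          · exact (tsub_tsub_cancel_of_le hca).symm
          · exact tsub_tsub_cancel_of_le hda
        by_cases hcd : c = a - d
        · subst hcd
          simp [tsub_tsub_cancel_of_le hda]
        · simp [this, hcd]
      · have hcd : c ≠ a - d := fun h => hca (h ▸ tsub_le_self)
        simp [hcd, multiDescFactorial_eq_zero_iff.mpr hca]
    · rw [if_neg hda, if_neg fun h : a - c = d => hda (h ▸ tsub_le_self)]
  | add p q hp hq =>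
    simp only [map_add, coeff_add, hp, hq]
    split_ifs <;> ring

lemma diffAction_eq_zero_iff [IsDomain R] [CharZero R] {a : σ →₀ ℕ} {p : MvPolynomial σ R} :
    diffAction a p = 0 ↔ ∀ c ≤ a, coeff c p = 0 := by
  constructor
  · intro h c hc
    have := congrArg (coeff (a - c)) h
    rw [coeff_diffAction, if_pos tsub_le_self, tsub_tsub_cancel_of_le hc, coeff_zero] at this
    exact (mul_eq_zero.mp this).resolve_left
      (Nat.cast_ne_zero.mpr (multiDescFactorial_eq_zero_iff.not.mpr (not_not.mpr hc)))
  · intro h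
    ext d
    rw [coeff_diffAction, coeff_zero]
    split_ifs
    · rw [h _ tsub_le_self, mul_zero]
    · rfl

lemma diffAction_eq_zero_of_mem_span [IsDomain R] [CharZero R] {a : σ →₀ ℕ}
    {S : Set (σ →₀ ℕ)} {p : MvPolynomial σ R}
    (hp : p ∈ Ideal.span ((fun d => monomial d (1 : R)) '' S)) (ha : ∀ s ∈ S, ¬ s ≤ a) :
    diffAction a p = 0 := by
  refine diffAction_eq_zero_iff.mpr fun c hca => by_contra fun hc => ?_
  obtain ⟨s, hs, hsc⟩ := mem_ideal_span_monomial_image.mp hp c (mem_support_iff.mpr hc)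
  exact ha s hs (hsc.trans hca)

lemma diffAction_mem_boxSlice (a : σ →₀ ℕ) {k : ℕ} {p : MvPolynomial σ R}
    (hp : p.IsHomogeneous k) :
    diffAction a p ∈ restrictSupport R (boxSlice a (a.degree - k)) := by
  rw [mem_restrictSupport_iff]
  intro d hd
  rw [Finset.mem_coe, mem_support_iff, coeff_diffAction] at hd
  have hda : d ≤ a := by_contra fun h => by simp [h] at hd
  rw [if_pos hda] at hd
  refine ⟨hda, ?_⟩
  have hk := hp (right_ne_zero_of_mul hd)
  rw [Pi.one_def, ← Finsupp.degree_eq_weight_one] at hk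
  have := congrArg Finsupp.degree (tsub_add_cancel_of_le hda)
  rw [map_add] at this
  omega

end MvPolynomial

section MonomialIdeal

variable {σ R : Type*} [CommRing R] [Nontrivial R] {S : Set (σ →₀ ℕ)} {t : ℕ}

lemma exists_le_degree_eq_of_not {P : (σ →₀ ℕ) → Prop}
    (hP : ∀ c : σ →₀ ℕ, c.degree < t → (∀ j, P (c + Finsupp.single j 1)) → P c)
    {c : σ →₀ ℕ} (hc : ¬ P c) (hct : c.degree ≤ t) : ∃ a, c ≤ a ∧ a.degree = t ∧ ¬ P a := by
  induction hd : t - c.degree generalizing c with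
  | zero => exact ⟨c, le_rfl, by omega, hc⟩
  | succ d ih =>
    obtain ⟨j, hj⟩ : ∃ j, ¬ P (c + Finsupp.single j 1) := by
      by_contra! h
      exact hc (hP c (by omega) h)
    obtain ⟨a, hca, hat, ha⟩ := ih hj (by simp; omega) (by simp; omega)
    exact ⟨a, le_self_add.trans hca, hat, ha⟩

variable (hlevel : ∀ f : MvPolynomial σ R,
  (∀ j, X j * f ∈ Ideal.span ((fun d => monomial d (1 : R)) '' S)) →
  ∃ g : MvPolynomial σ R, g.IsHomogeneous t ∧ f - g ∈ Ideal.span ((fun d => monomial d 1) '' S))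
include hlevel

lemma exists_le_of_forall_exists_le_add_single {c : σ →₀ ℕ} (hc : c.degree < t)
    (hcS : ∀ j, ∃ s ∈ S, s ≤ c + Finsupp.single j 1) : ∃ s ∈ S, s ≤ c := by
  classical
  obtain ⟨g, hg, hfg⟩ := hlevel (monomial c 1) fun j => by
    rw [X, monomial_mul, one_mul, mem_ideal_span_monomial_image]
    intro b hb
    rw [support_monomial, if_neg one_ne_zero, Finset.mem_singleton] at hb
    rw [hb, add_comm]
    exact hcS j
  rw [mem_ideal_span_monomial_image] at hfg
  refine hfg c (mem_support_iff.mpr ?_)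
  rw [coeff_sub, coeff_monomial, if_pos rfl, hg.coeff_eq_zero hc.ne, sub_zero]
  exact one_ne_zero

lemma exists_mem_support_le_degree_eq_of_notMem {k : ℕ} {f : MvPolynomial σ R}
    (hf : f.IsHomogeneous k) (hkt : k ≤ t)
    (hfS : f ∉ Ideal.span ((fun d => monomial d (1 : R)) '' S)) :
    ∃ c ∈ f.support, ∃ a, c ≤ a ∧ a.degree = t ∧ ∀ s ∈ S, ¬ s ≤ a := by
  rw [mem_ideal_span_monomial_image] at hfS
  push Not at hfS
  obtain ⟨c, hcf, hcS⟩ := hfS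
  have hck : c.degree = k := by
    rw [Finsupp.degree_eq_weight_one, ← Pi.one_def]
    exact hf (mem_support_iff.mp hcf)
  obtain ⟨a, hca, hat, haS⟩ := exists_le_degree_eq_of_not (P := fun c => ∃ s ∈ S, s ≤ c)
    (fun c hc => exists_le_of_forall_exists_le_add_single hlevel hc) (by simpa using hcS)
    (by omega)
  exact ⟨c, hcf, a, hca, hat, by simpa using haS⟩

end MonomialIdeal

theorem level_monomial_power_injective_general {n : ℕ} {K : Type*} [Field K] [CharZero K]
    (I : Ideal (MvPolynomial (Fin n) K))
    (hmono : ∃ S : Set (Fin n →₀ ℕ),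
      I = Ideal.span ((fun d => (monomial d (1 : K) : MvPolynomial (Fin n) K)) '' S))
    (t : ℕ)
    (hlevel : ∀ f : MvPolynomial (Fin n) K, (∀ j : Fin n, X j * f ∈ I) →
      ∃ g : MvPolynomial (Fin n) K, g.IsHomogeneous t ∧ f - g ∈ I) :
    ∀ k : ℕ, 2 * k < t → ∀ f : MvPolynomial (Fin n) K, f.IsHomogeneous k →
      (∑ j : Fin n, X j) ^ (t - 2 * k) * f ∈ I → f ∈ I := by
  obtain ⟨S, rfl⟩ := hmono
  intro k hk f hf hmem
  by_contra hfI
  obtain ⟨c, hcf, a, hca, hat, haS⟩ :=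
    exists_mem_support_le_degree_eq_of_notMem hlevel hf (by omega) hfI
  set u := diffAction a f
  have hu : u ≠ 0 := fun h => mem_support_iff.mp hcf (diffAction_eq_zero_iff.mp h c hca)
  have hF : (sl2F _ K ^ (t - 2 * k)) u = 0 := by
    rw [← diffAction_sum_X_pow_mul]
    exact diffAction_eq_zero_of_mem_span hmem haS
  have hslice : u ∈ restrictSupport K (boxSlice a (t - k)) := hat ▸ diffAction_mem_boxSlice a hf
  have hE : (sl2E a ^ (k + 1)) u = 0 := sl2E_pow_eq_zero hslice (by omega)
  have hH : sl2H a u = ((t - 2 * k : ℕ) : K) • u := by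
    rw [sl2H_apply_of_isHomogeneous a (isHomogeneous_of_mem_boxSlice hslice), hat]
    push_cast [Nat.cast_sub hk.le, Nat.cast_sub (show k ≤ t by omega)]
    congr 1
    ring
  have ha : a ≠ 0 := ne_of_apply_ne Finsupp.degree (by rw [hat, map_zero]; omega)
  exact hu ((isSl2Triple_sl2 ha).eq_zero_of_pow_eq_zero hH hE hF)

/-- Let `R = K[x_1,...,x_n]`, `char K = 0`, and let `I ⊆ R` be a monomial
ideal such that `A = R/I` is Artinian and level of socle degree `t` (every
homogeneous polynomial of degree `> t` is in `I`, some degree-`t` homogeneous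
polynomial is not in `I`, and every socle element of `A` is the class of a
homogeneous polynomial of degree `t`). Then for `ℓ = x_1 + ... + x_n` and any
`k < t/2`, multiplication `×ℓ^{t-2k} : A_k → A_{t-k}` is injective. -/
theorem level_monomial_power_injective {n : ℕ} {K : Type*} [Field K] [CharZero K]
    (I : Ideal (MvPolynomial (Fin n) K))
    (hmono : ∃ S : Set (Fin n →₀ ℕ),
      I = Ideal.span ((fun d => (monomial d (1 : K) : MvPolynomial (Fin n) K)) '' S))
    (hartinian : ∀ j : Fin n, ∃ k : ℕ, (X j : MvPolynomial (Fin n) K) ^ k ∈ I)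
    (t : ℕ)
    (htop : ∀ (f : MvPolynomial (Fin n) K) (d : ℕ), t < d → f.IsHomogeneous d → f ∈ I)
    (hsocdeg : ∃ f : MvPolynomial (Fin n) K, f.IsHomogeneous t ∧ f ∉ I)
    (hlevel : ∀ f : MvPolynomial (Fin n) K, (∀ j : Fin n, X j * f ∈ I) →
      ∃ g : MvPolynomial (Fin n) K, g.IsHomogeneous t ∧ f - g ∈ I) :
    ∀ k : ℕ, 2 * k < t → ∀ f : MvPolynomial (Fin n) K, f.IsHomogeneous k →
      (∑ j : Fin n, X j) ^ (t - 2 * k) * f ∈ I → f ∈ I :=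
  level_monomial_power_injective_general I hmono t hlevel
end

section
/- Let R = K[x_1,...,x_n] with char(K) = 0 and I a monomial ideal such that A = R/I is Artinian and level of socle degree t. Then for ℓ = x_1 + ... + x_n and any k < t/2, the map ×ℓ : A_k → A_{k+1} is injective. -/
/-
If `f ∉ I`, some monomial `x^u` of `f` is standard (not in `I`); extend it to a maximal standard
monomial `x^v`. It spans a socle element, so levelness forces `|v| = t > 2k`. Every monomial
dividing `x^v` is standard, so `ℓ f ∈ I` makes `ℓ f` vanish in the box algebra
`K[x] ⧸ (x_i ^ (v_i + 1))`. In characteristic `0` this algebra has the weak Lefschetz property,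
seen dually through an `sl₂`-action on its inverse system (contraction by `ℓ`, a weighted
multiplication by `ℓ`, and the grading): contraction by `ℓ` maps degree `k + 1` onto degree `k`.
Pairing `ℓ f` with a preimage of the dual of `x^u` shows that the coefficient of `x^u` in `f`
vanishes.
-/

open MvPolynomial

namespace Finsupp

lemma add_single_tsub_single_comm {σ : Type*} [DecidableEq σ] (b : σ →₀ ℕ) {i j : σ}
    (hij : i ≠ j) : b + single i 1 - single j 1 = b - single j 1 + single i 1 := by
  ext x
  simp only [add_apply, tsub_apply, single_apply]
  split_ifs <;> subst_vars <;> first | omega | exact absurd rfl hij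

lemma exists_le_maximal_of_degree_le {σ : Type*} {P : (σ →₀ ℕ) → Prop} {u : σ →₀ ℕ}
    (t : ℕ) (hP : ∀ v, P v → v.degree ≤ t) (hu : P u) :
    ∃ v, u ≤ v ∧ P v ∧ ∀ i, ¬P (v + single i 1) := by
  obtain ⟨v, ⟨huv, hv⟩, hmax⟩ :=
    (measure fun v : σ →₀ ℕ => t - v.degree).wf.has_min {v | u ≤ v ∧ P v} ⟨u, le_rfl, hu⟩
  refine ⟨v, huv, hv, fun i hi => hmax _ ⟨huv.trans le_self_add, hi⟩ ?_⟩
  show t - (v + single i 1).degree < t - v.degree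
  have := hP _ hi
  rw [map_add, degree_single] at this ⊢
  omega

end Finsupp

namespace BoxLefschetz

variable {σ K : Type*} [Field K] {w : (σ →₀ ℕ) → K}

variable (K) in
/-- The dual of the degree-`j` part of `K[x] ⧸ (x_i ^ (m_i + 1))`, as functions on exponents. -/
def boxSpace (m : σ →₀ ℕ) (j : ℕ) : Submodule K ((σ →₀ ℕ) → K) where
  carrier := {w | ∀ b, w b ≠ 0 → b ≤ m ∧ b.degree = j}
  add_mem' {w v} hw hv b hb := by
    by_cases h : w b = 0
    · exact hv b (by simpa [h] using hb)
    · exact hw b h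
  zero_mem' _ hb := absurd rfl hb
  smul_mem' c w hw b hb := hw b (right_ne_zero_of_mul hb)

lemma single_mem_boxSpace [DecidableEq σ] {m u : σ →₀ ℕ} {j : ℕ} (hum : u ≤ m)
    (hu : u.degree = j) :
    Pi.single u (1 : K) ∈ boxSpace K m j := by
  intro b hb
  obtain rfl : b = u := by by_contra h; exact hb (Pi.single_eq_of_ne h 1)
  exact ⟨hum, hu⟩

instance (m : σ →₀ ℕ) (j : ℕ) : FiniteDimensional K (boxSpace K m j) := by
  classical
  refine Module.Finite.of_injective
    ((LinearMap.funLeft K K ((↑) : Finset.Iic m → σ →₀ ℕ)).comp (boxSpace K m j).subtype) ?_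
  intro w v hwv
  ext b
  by_cases hb : b ≤ m
  · exact congrFun hwv ⟨b, Finset.mem_Iic.mpr hb⟩
  · rw [not_imp_comm.mp (w.2 b) fun h => hb h.1, not_imp_comm.mp (v.2 b) fun h => hb h.1]

noncomputable def pairing (w : (σ →₀ ℕ) → K) : MvPolynomial σ K →ₗ[K] K :=
  Finsupp.linearCombination K w ∘ₗ (AddMonoidAlgebra.coeffLinearEquiv K).toLinearMap

lemma pairing_apply (f : MvPolynomial σ K) :
    pairing w f = ∑ b ∈ f.support, coeff b f * w b :=
  Finsupp.linearCombination_apply K _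

lemma pairing_monomial (a : σ →₀ ℕ) (c : K) : pairing w (monomial a c) = c * w a :=
  Finsupp.linearCombination_single K c a

lemma pairing_single [DecidableEq σ] (u : σ →₀ ℕ) (f : MvPolynomial σ K) :
    pairing (Pi.single u 1) f = coeff u f := by
  rw [pairing_apply]
  simp only [Pi.single_apply, mul_ite, mul_one, mul_zero, Finset.sum_ite_eq']
  exact ite_eq_left_iff.mpr fun h => (notMem_support_iff.mp h).symm

lemma pairing_eq_zero {f : MvPolynomial σ K} (h : ∀ b, w b ≠ 0 → coeff b f = 0) :
    pairing w f = 0 := by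
  rw [pairing_apply]
  refine Finset.sum_eq_zero fun b _ => ?_
  by_cases hb : w b = 0
  · rw [hb, mul_zero]
  · rw [h b hb, zero_mul]

variable [Fintype σ] {m : σ →₀ ℕ} {j : ℕ}

noncomputable def lowerOp : ((σ →₀ ℕ) → K) →ₗ[K] ((σ →₀ ℕ) → K) :=
  ∑ i, LinearMap.funLeft K K (· + Finsupp.single i 1)

/-- The weight `b_i (m_i - b_i + 1)` keeps `raiseOp m` inside the functions supported below `m`
and makes `lowerOp`, `raiseOp m` and the grading an `sl₂`-triple (`lowerOp_raiseOp_apply`). -/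
noncomputable def raiseOp (m : σ →₀ ℕ) : ((σ →₀ ℕ) → K) →ₗ[K] ((σ →₀ ℕ) → K) where
  toFun w b := ∑ i, (b i : K) * ((m i : K) - b i + 1) * w (b - Finsupp.single i 1)
  map_add' w v := by ext b; simp only [Pi.add_apply, mul_add, Finset.sum_add_distrib]
  map_smul' c w := by
    ext b
    simp only [Pi.smul_apply, smul_eq_mul, RingHom.id_apply, Finset.mul_sum]
    exact Finset.sum_congr rfl fun i _ => by ring

@[simp] lemma lowerOp_apply (w : (σ →₀ ℕ) → K) (b : σ →₀ ℕ) :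
    lowerOp w b = ∑ i, w (b + Finsupp.single i 1) := by
  simp [lowerOp]

@[simp] lemma raiseOp_apply (m : σ →₀ ℕ) (w : (σ →₀ ℕ) → K) (b : σ →₀ ℕ) :
    raiseOp m w b = ∑ i, (b i : K) * ((m i : K) - b i + 1) * w (b - Finsupp.single i 1) :=
  rfl

lemma lowerOp_raiseOp_apply (m : σ →₀ ℕ) (w : (σ →₀ ℕ) → K) (b : σ →₀ ℕ) :
    lowerOp (raiseOp m w) b =
      raiseOp m (lowerOp w) b + ((m.degree : K) - 2 * b.degree) * w b := by
  classical
  have hterm : ∀ i j : σ,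
      ((b + Finsupp.single i 1 : σ →₀ ℕ) j : K) *
          ((m j : K) - (b + Finsupp.single i 1 : σ →₀ ℕ) j + 1) *
          w (b + Finsupp.single i 1 - Finsupp.single j 1) -
        (b j : K) * ((m j : K) - b j + 1) * w (b - Finsupp.single j 1 + Finsupp.single i 1) =
      if i = j then ((m i : K) - 2 * b i) * w b else 0 := by
    intro i j
    rcases eq_or_ne i j with rfl | hij
    · rw [if_pos rfl, add_tsub_cancel_right]
      rcases eq_or_ne (b i) 0 with hb | hb
      · simp only [Finsupp.add_apply, Finsupp.single_eq_same, hb]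
        push_cast
        ring
      · rw [tsub_add_cancel_of_le (Finsupp.single_le_iff.mpr (Nat.one_le_iff_ne_zero.mpr hb))]
        simp only [Finsupp.add_apply, Finsupp.single_eq_same]
        push_cast
        ring
    · rw [if_neg hij, Finsupp.add_single_tsub_single_comm b hij, Finsupp.add_apply,
        Finsupp.single_eq_of_ne hij.symm, add_zero, sub_self]
  have hdeg : ((m.degree : K) - 2 * b.degree) * w b = ∑ i, ((m i : K) - 2 * b i) * w b := by
    simp only [← Finset.sum_mul, Finset.sum_sub_distrib, ← Finset.mul_sum, Finsupp.degree_eq_sum,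
      Nat.cast_sum]
  simp only [lowerOp_apply, raiseOp_apply, Finset.mul_sum]
  rw [Finset.sum_comm (γ := σ) (f := fun j i => (b j : K) * ((m j : K) - b j + 1) *
      w (b - Finsupp.single j 1 + Finsupp.single i 1)), hdeg, ← sub_eq_iff_eq_add',
    ← Finset.sum_sub_distrib]
  refine Finset.sum_congr rfl fun i _ => ?_
  rw [← Finset.sum_sub_distrib, Finset.sum_congr rfl fun j _ => hterm i j, Finset.sum_ite_eq]
  simp

lemma exists_ne_zero_of_lowerOp_ne_zero {b : σ →₀ ℕ} (hb : lowerOp w b ≠ 0) :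
    ∃ i, w (b + Finsupp.single i 1) ≠ 0 := by
  obtain ⟨i, -, hi⟩ := Finset.exists_ne_zero_of_sum_ne_zero (lowerOp_apply w b ▸ hb)
  exact ⟨i, hi⟩

lemma lowerOp_mem_boxSpace (hw : w ∈ boxSpace K m (j + 1)) : lowerOp w ∈ boxSpace K m j := by
  intro b hb
  obtain ⟨i, hi⟩ := exists_ne_zero_of_lowerOp_ne_zero hb
  obtain ⟨hle, hdeg⟩ := hw _ hi
  rw [map_add, Finsupp.degree_single] at hdeg
  exact ⟨le_self_add.trans hle, by omega⟩

lemma lowerOp_eq_zero_of_mem_boxSpace_zero (hw : w ∈ boxSpace K m 0) : lowerOp w = 0 := by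
  ext b
  by_contra hb
  obtain ⟨i, hi⟩ := exists_ne_zero_of_lowerOp_ne_zero hb
  have hdeg := (hw _ hi).2
  rw [map_add, Finsupp.degree_single] at hdeg
  omega

lemma raiseOp_mem_boxSpace (hw : w ∈ boxSpace K m j) : raiseOp m w ∈ boxSpace K m (j + 1) := by
  classical
  intro b hb
  obtain ⟨i, -, hi⟩ := Finset.exists_ne_zero_of_sum_ne_zero (raiseOp_apply m w b ▸ hb)
  obtain ⟨hbmi, hwi⟩ := mul_ne_zero_iff.mp hi
  obtain ⟨hbi, hmi⟩ := mul_ne_zero_iff.mp hbmi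
  obtain ⟨hle, hdeg⟩ := hw _ hwi
  have hib : Finsupp.single i 1 ≤ b :=
    Finsupp.single_le_iff.mpr (Nat.one_le_iff_ne_zero.mpr fun h => hbi (by rw [h, Nat.cast_zero]))
  refine ⟨fun x => ?_, ?_⟩
  · have hx := hle x
    simp only [Finsupp.tsub_apply, Finsupp.single_apply] at hx
    split_ifs at hx with hix
    · subst hix
      have : b i ≠ m i + 1 := fun h => hmi (by rw [h]; push_cast; ring)
      omega
    · omega
  · rw [← tsub_add_cancel_of_le hib, map_add, hdeg, Finsupp.degree_single]

lemma lowerOp_raiseOp_of_mem_boxSpace (hw : w ∈ boxSpace K m j) :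
    lowerOp (raiseOp m w) = raiseOp m (lowerOp w) + ((m.degree : K) - 2 * j) • w := by
  ext b
  rw [lowerOp_raiseOp_apply, Pi.add_apply, Pi.smul_apply, smul_eq_mul]
  by_cases hb : w b = 0
  · rw [hb, mul_zero, mul_zero]
  · rw [(hw b hb).2]

/-- `lowerOp` moves an eigenvector of degree `j` to one of degree `j - 1` whose eigenvalue is
smaller by `|m| - 2 (j - 1)`, and it kills degree `0`. -/
lemma exists_natCast_eq_of_raiseOp_lowerOp_eq_smul (hj : 2 * j ≤ m.degree)
    (hw : w ∈ boxSpace K m j) (hw0 : w ≠ 0) {c : K} (hc : raiseOp m (lowerOp w) = c • w) :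
    ∃ N : ℕ, c = N := by
  induction j generalizing w c with
  | zero =>
    refine ⟨0, ?_⟩
    rw [lowerOp_eq_zero_of_mem_boxSpace_zero hw, map_zero, eq_comm, smul_eq_zero] at hc
    exact_mod_cast hc.resolve_right hw0
  | succ j ih =>
    by_cases hD : lowerOp w = 0
    · refine ⟨0, ?_⟩
      rw [hD, map_zero, eq_comm, smul_eq_zero] at hc
      exact_mod_cast hc.resolve_right hw0
    have hDw := lowerOp_mem_boxSpace hw
    have hc' : raiseOp m (lowerOp (lowerOp w)) =
        (c - ((m.degree : K) - 2 * j)) • lowerOp w := by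
      have := lowerOp_raiseOp_of_mem_boxSpace hDw
      rw [hc, map_smul] at this
      rw [sub_smul, this, add_sub_cancel_right]
    obtain ⟨N, hN⟩ := ih (by omega) hDw hD hc'
    refine ⟨N + (m.degree - 2 * j), ?_⟩
    push_cast [Nat.cast_sub (show 2 * j ≤ m.degree by omega)]
    linear_combination hN

lemma eq_zero_of_lowerOp_raiseOp_eq_zero [CharZero K] (hj : 2 * j < m.degree)
    (hw : w ∈ boxSpace K m j) (hDU : lowerOp (raiseOp m w) = 0) : w = 0 := by
  by_contra hw0
  have hc : raiseOp m (lowerOp w) = (-((m.degree : K) - 2 * j)) • w := by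
    rw [neg_smul, eq_neg_iff_add_eq_zero, ← lowerOp_raiseOp_of_mem_boxSpace hw, hDU]
  obtain ⟨N, hN⟩ := exists_natCast_eq_of_raiseOp_lowerOp_eq_smul hj.le hw hw0 hc
  have : ((N + (m.degree - 2 * j) : ℕ) : K) = 0 := by
    push_cast [Nat.cast_sub hj.le]
    linear_combination -hN
  have := Nat.cast_eq_zero.mp this
  omega

/-- `lowerOp ∘ raiseOp m` is injective on the finite-dimensional `boxSpace K m j`, hence
surjective. -/
lemma exists_mem_boxSpace_lowerOp_eq [CharZero K] (hj : 2 * j < m.degree) {v : (σ →₀ ℕ) → K}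
    (hv : v ∈ boxSpace K m j) : ∃ w ∈ boxSpace K m (j + 1), lowerOp w = v := by
  let T : boxSpace K m j →ₗ[K] boxSpace K m j :=
    (lowerOp ∘ₗ raiseOp m).restrict fun _ hw => lowerOp_mem_boxSpace (raiseOp_mem_boxSpace hw)
  have hT : Function.Injective T := by
    rw [injective_iff_map_eq_zero]
    intro w hw
    exact Subtype.ext (eq_zero_of_lowerOp_raiseOp_eq_zero hj w.2 (congrArg Subtype.val hw))
  obtain ⟨z, hz⟩ := LinearMap.injective_iff_surjective.mp hT ⟨v, hv⟩
  exact ⟨raiseOp m z, raiseOp_mem_boxSpace z.2, congrArg Subtype.val hz⟩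

lemma pairing_sum_X_mul (f : MvPolynomial σ K) :
    pairing w ((∑ i, X i) * f) = pairing (lowerOp w) f := by
  induction f using MvPolynomial.induction_on' with
  | monomial a c =>
    simp only [Finset.sum_mul, map_sum, X, monomial_mul, one_mul, pairing_monomial,
      lowerOp_apply, Finset.mul_sum, add_comm]
  | add p q hp hq => rw [mul_add, map_add, map_add, hp, hq]

end BoxLefschetz

namespace MvPolynomial

variable {σ R : Type*} [CommRing R] {I : Ideal (MvPolynomial σ R)}

lemma mem_span_monomial_image_iff [Nontrivial R] {S : Set (σ →₀ ℕ)}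
    {f : MvPolynomial σ R} :
    f ∈ Ideal.span ((fun s => monomial s (1 : R)) '' S) ↔
      ∀ b ∈ f.support, monomial b (1 : R) ∈ Ideal.span ((fun s => monomial s (1 : R)) '' S) := by
  classical
  simp only [mem_ideal_span_monomial_image, support_monomial, if_neg one_ne_zero,
    Finset.mem_singleton, forall_eq]

lemma degree_le_of_monomial_notMem {t : ℕ}
    (htop : ∀ (f : MvPolynomial σ R) (d : ℕ), t < d → f.IsHomogeneous d → f ∈ I)
    {v : σ →₀ ℕ} (hv : monomial v (1 : R) ∉ I) : v.degree ≤ t :=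
  not_lt.mp fun h => hv (htop _ _ h (isHomogeneous_monomial 1 rfl))

variable (hI : ∀ g ∈ I, ∀ b ∈ g.support, monomial b (1 : R) ∈ I)
include hI

lemma coeff_eq_zero_of_le_of_monomial_notMem {g : MvPolynomial σ R} (hg : g ∈ I)
    {v b : σ →₀ ℕ} (hv : monomial v (1 : R) ∉ I) (hbv : b ≤ v) : coeff b g = 0 := by
  by_contra hb
  apply hv
  rw [← tsub_add_cancel_of_le hbv, ← one_mul (1 : R), ← monomial_mul]
  exact I.mul_mem_left _ (hI g hg b (mem_support_iff.mpr hb))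

lemma degree_eq_of_monomial_sub_mem [Nontrivial R] {v : σ →₀ ℕ} (hv : monomial v (1 : R) ∉ I)
    {t : ℕ} {g : MvPolynomial σ R} (hg : g.IsHomogeneous t) (hvg : monomial v 1 - g ∈ I) :
    v.degree = t := by
  classical
  by_contra hvt
  refine hv (hI _ hvg v (mem_support_iff.mpr ?_))
  rw [coeff_sub, coeff_monomial, if_pos rfl, hg.coeff_eq_zero hvt, sub_zero]
  exact one_ne_zero

end MvPolynomial

open BoxLefschetz

theorem level_monomial_mul_injective_general {n : ℕ} {K : Type*} [Field K] [CharZero K]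
    (I : Ideal (MvPolynomial (Fin n) K))
    (hmono : ∃ S : Set (Fin n →₀ ℕ),
      I = Ideal.span ((fun d => (monomial d (1 : K) : MvPolynomial (Fin n) K)) '' S))
    (t : ℕ)
    (htop : ∀ (f : MvPolynomial (Fin n) K) (d : ℕ), t < d → f.IsHomogeneous d → f ∈ I)
    (hlevel : ∀ f : MvPolynomial (Fin n) K, (∀ j : Fin n, X j * f ∈ I) →
      ∃ g : MvPolynomial (Fin n) K, g.IsHomogeneous t ∧ f - g ∈ I) :
    ∀ k : ℕ, 2 * k < t → ∀ f : MvPolynomial (Fin n) K, f.IsHomogeneous k →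
      (∑ j : Fin n, X j) * f ∈ I → f ∈ I := by
  intro k hk f hf hlf
  obtain ⟨S, hS⟩ := hmono
  have hI : ∀ g, g ∈ I ↔ ∀ b ∈ g.support, monomial b (1 : K) ∈ I := by
    subst hS
    exact fun g => mem_span_monomial_image_iff
  by_contra hfI
  obtain ⟨u, hu, huI⟩ : ∃ u ∈ f.support, monomial u (1 : K) ∉ I := by
    simpa [hI f] using hfI
  have huk : u.degree = k := by
    by_contra h
    exact mem_support_iff.mp hu (hf.coeff_eq_zero h)
  obtain ⟨v, huv, hvI, hvmax⟩ := Finsupp.exists_le_maximal_of_degree_le t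
    (fun v => degree_le_of_monomial_notMem htop) huI
  have hvt : v.degree = t := by
    obtain ⟨g, hg, hvg⟩ := hlevel (monomial v 1) fun i => by
      rw [X, monomial_mul, one_mul, add_comm]
      exact not_not.mp (hvmax i)
    exact degree_eq_of_monomial_sub_mem (fun g => (hI g).1) hvI hg hvg
  obtain ⟨w, hw, hwu⟩ :=
    exists_mem_boxSpace_lowerOp_eq (by omega) (single_mem_boxSpace (K := K) huv huk)
  have hpair := pairing_sum_X_mul (w := w) f
  rw [hwu, pairing_single,
    pairing_eq_zero fun b hb => coeff_eq_zero_of_le_of_monomial_notMem (fun g => (hI g).1)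
      hlf hvI (hw b hb).1] at hpair
  exact mem_support_iff.mp hu hpair.symm

/-- Let `R = K[x_1,...,x_n]`, `char K = 0`, and let `I ⊆ R` be a monomial
ideal such that `A = R/I` is Artinian and level of socle degree `t` (every
homogeneous polynomial of degree `> t` is in `I`, some degree-`t` homogeneous
polynomial is not in `I`, and every socle element of `A` is the class of a
homogeneous polynomial of degree `t`). Then for `ℓ = x_1 + ... + x_n` and any
`k < t/2`, multiplication `×ℓ : A_k → A_{k+1}` is injective. -/
theorem level_monomial_mul_injective {n : ℕ} {K : Type*} [Field K] [CharZero K]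
    (I : Ideal (MvPolynomial (Fin n) K))
    (hmono : ∃ S : Set (Fin n →₀ ℕ),
      I = Ideal.span ((fun d => (monomial d (1 : K) : MvPolynomial (Fin n) K)) '' S))
    (hartinian : ∀ j : Fin n, ∃ k : ℕ, (X j : MvPolynomial (Fin n) K) ^ k ∈ I)
    (t : ℕ)
    (htop : ∀ (f : MvPolynomial (Fin n) K) (d : ℕ), t < d → f.IsHomogeneous d → f ∈ I)
    (hsocdeg : ∃ f : MvPolynomial (Fin n) K, f.IsHomogeneous t ∧ f ∉ I)
    (hlevel : ∀ f : MvPolynomial (Fin n) K, (∀ j : Fin n, X j * f ∈ I) →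
      ∃ g : MvPolynomial (Fin n) K, g.IsHomogeneous t ∧ f - g ∈ I) :
    ∀ k : ℕ, 2 * k < t → ∀ f : MvPolynomial (Fin n) K, f.IsHomogeneous k →
      (∑ j : Fin n, X j) * f ∈ I → f ∈ I :=
  level_monomial_mul_injective_general I hmono t htop hlevel
end

section
/- For the whiskered graph G = w(K_3), where K_3 is the complete graph on vertices x_1,x_2,x_3, over a field K of characteristic 2, the multiplication map ×ℓ : A_1 → A_2 of the Artinian algebra A = K[x_1,x_2,x_3,y_1,y_2,y_3]/(⟨all squares of variables⟩ + I(G)) with ℓ the sum of all six variables does not have maximal rank (its rank is strictly less than 6 = dim_K A_1, while dim_K A_2 = 9). -/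
open MvPolynomial

private lemma whisker_aux {K : Type*} [Field K] [CharP K 2] :
    ¬ (∀ f : MvPolynomial (Fin 3 ⊕ Fin 3) K, f.IsHomogeneous 1 →
        (∑ v : Fin 3 ⊕ Fin 3, X v) * f ∈ Ideal.span
          ((Set.range fun v : Fin 3 ⊕ Fin 3 =>
              (X v : MvPolynomial (Fin 3 ⊕ Fin 3) K) ^ 2) ∪
            {X (Sum.inl 0) * X (Sum.inl 1), X (Sum.inl 0) * X (Sum.inl 2),
             X (Sum.inl 1) * X (Sum.inl 2), X (Sum.inl 0) * X (Sum.inr 0),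
             X (Sum.inl 1) * X (Sum.inr 1), X (Sum.inl 2) * X (Sum.inr 2)}) →
        f ∈ Ideal.span
          ((Set.range fun v : Fin 3 ⊕ Fin 3 =>
              (X v : MvPolynomial (Fin 3 ⊕ Fin 3) K) ^ 2) ∪
            {X (Sum.inl 0) * X (Sum.inl 1), X (Sum.inl 0) * X (Sum.inl 2),
             X (Sum.inl 1) * X (Sum.inl 2), X (Sum.inl 0) * X (Sum.inr 0),
             X (Sum.inl 1) * X (Sum.inr 1), X (Sum.inl 2) * X (Sum.inr 2)})) := by
  intro h
  set c : Fin 3 ⊕ Fin 3 → TrivSqZeroExt K K :=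
    fun v => if v = Sum.inl 0 then (TrivSqZeroExt.inr 1 : TrivSqZeroExt K K) else 0 with hc
  have hker : Ideal.span
      ((Set.range fun v : Fin 3 ⊕ Fin 3 =>
          (X v : MvPolynomial (Fin 3 ⊕ Fin 3) K) ^ 2) ∪
        {X (Sum.inl 0) * X (Sum.inl 1), X (Sum.inl 0) * X (Sum.inl 2),
         X (Sum.inl 1) * X (Sum.inl 2), X (Sum.inl 0) * X (Sum.inr 0),
         X (Sum.inl 1) * X (Sum.inr 1), X (Sum.inl 2) * X (Sum.inr 2)})
      ≤ RingHom.ker (aeval (R := K) c).toRingHom := by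
    rw [Ideal.span_le]
    rintro g (⟨v, rfl⟩ | hg)
    · simp only [SetLike.mem_coe, RingHom.mem_ker, AlgHom.toRingHom_eq_coe,
        RingHom.coe_coe, map_pow, aeval_X, hc]
      rcases eq_or_ne v (Sum.inl 0) with rfl | hv
      · simp [sq, TrivSqZeroExt.inr_mul_inr]
      · simp [hv]
    · simp only [Set.mem_insert_iff, Set.mem_singleton_iff] at hg
      rcases hg with rfl | rfl | rfl | rfl | rfl | rfl <;>
        · simp only [SetLike.mem_coe, RingHom.mem_ker, AlgHom.toRingHom_eq_coe,
            RingHom.coe_coe, map_mul, aeval_X, hc]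
          norm_num [TrivSqZeroExt.inr_mul_inr]
  have hhom : (∑ v : Fin 3 ⊕ Fin 3, (X v : MvPolynomial (Fin 3 ⊕ Fin 3) K)).IsHomogeneous 1 :=
    IsHomogeneous.sum _ _ _ fun v _ => isHomogeneous_X _ _
  have hsq := h _ hhom (by
    have hℓ2 : (∑ v : Fin 3 ⊕ Fin 3, (X v : MvPolynomial (Fin 3 ⊕ Fin 3) K)) *
        (∑ v : Fin 3 ⊕ Fin 3, X v) = ∑ v : Fin 3 ⊕ Fin 3, (X v) ^ 2 := by
      rw [← sq]; exact CharTwo.sum_sq _ _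
    rw [hℓ2]
    exact Ideal.sum_mem _ fun v _ => Ideal.subset_span (Or.inl ⟨v, rfl⟩))
  have h0 : aeval (R := K) c (∑ v : Fin 3 ⊕ Fin 3, X v) = 0 := hker hsq
  rw [map_sum] at h0
  simp only [aeval_X, hc] at h0
  rw [Finset.sum_ite_eq' Finset.univ (Sum.inl 0)] at h0
  simp only [Finset.mem_univ, if_true] at h0
  have := congrArg TrivSqZeroExt.snd h0
  simp at this

/-- For the whiskered complete graph `G = w(K_3)` over a field `K` of
characteristic `2`, the multiplication map `×ℓ : A_1 → A_2` of the Artinian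
algebra `A = K[x_1,x_2,x_3,y_1,y_2,y_3]/(squares + I(G))`, with `ℓ` the sum of
all six variables, fails to have maximal rank: since
`dim A_1 = 6 ≤ 9 = dim A_2`, maximal rank means injectivity, and here some
nonzero element of `A_1` is killed by `ℓ`; i.e. some degree-one polynomial
`f ∉ I` satisfies `ℓ f ∈ I`. -/
theorem whisker_K3_char_two_fails_maximal_rank {K : Type*} [Field K] [CharP K 2] :
    let R := MvPolynomial (Fin 3 ⊕ Fin 3) K
    let I : Ideal R := Ideal.span
      ((Set.range fun v : Fin 3 ⊕ Fin 3 => (X v : R) ^ 2) ∪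
        {X (Sum.inl 0) * X (Sum.inl 1), X (Sum.inl 0) * X (Sum.inl 2),
         X (Sum.inl 1) * X (Sum.inl 2), X (Sum.inl 0) * X (Sum.inr 0),
         X (Sum.inl 1) * X (Sum.inr 1), X (Sum.inl 2) * X (Sum.inr 2)})
    let ℓ : R := ∑ v : Fin 3 ⊕ Fin 3, X v
    ¬ (∀ f : R, f.IsHomogeneous 1 → ℓ * f ∈ I → f ∈ I) := by
  intro R I ℓ
  exact whisker_aux
end
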